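/- arXiv:1502.02722 — 7 statements merged into one kernel-verified Lean document; each statement's English description precedes it below -/
import Mathlib

section
/- If A is a symmetric n×n 0-1 matrix (with possibly nonzero diagonal) such that A² = J + qI, where J is the all-ones matrix and q ≥ 1, then every row of A sums to q+1. -/
/-- If `A` is a symmetric `n × n` 0-1 matrix with `A ^ 2 = J + q • I` where `J` is the
all-ones matrix, `q ≥ 1` and `n = q ^ 2 + q + 1`, then every row of `A` sums to `q + 1`. -/
theorem row_sums_of_sq_eq_J_add_qI (q n : ℕ) (hq : 1 ≤ q) (hn : n = q ^ 2 + q + 1)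
    (A : Matrix (Fin n) (Fin n) ℝ) (hsym : A.IsSymm)
    (h01 : ∀ i j, A i j = 0 ∨ A i j = 1)
    (hA : A * A = Matrix.of (fun _ _ => (1 : ℝ)) + (q : ℝ) • (1 : Matrix (Fin n) (Fin n) ℝ)) :
    ∀ i, ∑ j, A i j = q + 1 := by
  intro i
  have h := congrFun (congrFun hA i) i
  simp only [Matrix.mul_apply, Matrix.add_apply, Matrix.smul_apply, Matrix.one_apply_eq,
    Matrix.of_apply, smul_eq_mul, mul_one] at h
  have key : ∀ j, A i j * A j i = A i j := by
    intro j
    have hs : A j i = A i j := hsym.apply i j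
    rw [hs]
    rcases h01 i j with h0 | h0 <;> simp [h0]
  calc ∑ j, A i j = ∑ j, A i j * A j i := by
        exact Finset.sum_congr rfl fun j _ => (key j).symm
    _ = 1 + q := h
    _ = q + 1 := by ring
end

section
/- The eigenvalue q+1 of a matrix A satisfying A² = J + qI (with n = q²+q+1, q ≥ 1, A symmetric with nonnegative entries and row sums q+1) has multiplicity exactly 1, and the multiplicities a, b of √q and -√q satisfy a + b = q² + q and (a - b)√q + (q+1) = trace(A). -/
set_option maxHeartbeats 1600000

open Module Matrix DirectSum

/-- For a symmetric nonnegative `n × n` matrix `A` with row sums `q + 1`,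
`n = q ^ 2 + q + 1` and `A ^ 2 = J + q • I`, the eigenvalue `q + 1` has multiplicity
exactly `1`, and the multiplicities `a`, `b` of `√q` and `-√q` satisfy
`a + b = q ^ 2 + q` and `(a - b) √q + (q + 1) = trace A`. -/
theorem multiplicities_of_sq_eq_J_add_qI (q n : ℕ) (hq : 1 ≤ q) (hn : n = q ^ 2 + q + 1)
    (A : Matrix (Fin n) (Fin n) ℝ) (hsym : A.IsSymm)
    (hnonneg : ∀ i j, 0 ≤ A i j)
    (hrow : ∀ i, ∑ j, A i j = q + 1)
    (hA : A * A = Matrix.of (fun _ _ => (1 : ℝ)) + (q : ℝ) • (1 : Matrix (Fin n) (Fin n) ℝ)) :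
    Module.finrank ℝ (Module.End.eigenspace (Matrix.toLin' A) ((q : ℝ) + 1)) = 1 ∧
    ∀ a b : ℕ,
      a = Module.finrank ℝ (Module.End.eigenspace (Matrix.toLin' A) (Real.sqrt q)) →
      b = Module.finrank ℝ (Module.End.eigenspace (Matrix.toLin' A) (-Real.sqrt q)) →
      a + b = q ^ 2 + q ∧ ((a : ℝ) - (b : ℝ)) * Real.sqrt q + ((q : ℝ) + 1) = A.trace := by
  classical
  have hq1 : (1:ℝ) ≤ (q:ℝ) := by exact_mod_cast hq
  set s : ℝ := Real.sqrt q with hs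
  set L : ℝ := (q:ℝ) + 1 with hL
  have hq0 : (0:ℝ) ≤ q := by linarith
  have hs2 : s * s = (q:ℝ) := Real.mul_self_sqrt hq0
  have hs0 : 0 < s := Real.sqrt_pos.mpr (by linarith)
  have hsL : s < L := by nlinarith [sq_nonneg (s - 1)]
  have hnpos : 0 < n := by omega
  have hnR : (n:ℝ) = (q:ℝ)^2 + (q:ℝ) + 1 := by rw [hn]; push_cast; ring
  set Jm : Matrix (Fin n) (Fin n) ℝ := Matrix.of (fun _ _ => (1:ℝ)) with hJm
  -- column sums
  have hcol : ∀ j, ∑ i, A i j = L := by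
    intro j
    calc ∑ i, A i j = ∑ i, A j i := Finset.sum_congr rfl fun i _ => (hsym.apply j i)
      _ = L := hrow j
  have hJA : Jm * A = L • Jm := by
    ext i j
    simp only [Matrix.mul_apply, Matrix.smul_apply, hJm, Matrix.of_apply, one_mul, smul_eq_mul,
      mul_one]
    exact hcol j
  have hAJ : A * Jm = L • Jm := by
    ext i j
    simp only [Matrix.mul_apply, Matrix.smul_apply, hJm, Matrix.of_apply, mul_one, smul_eq_mul]
    exact hrow i
  have hA' : A * A - (q:ℝ) • (1 : Matrix (Fin n) (Fin n) ℝ) = Jm := by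
    rw [hA]; exact add_sub_cancel_right _ _
  have key1 : (A * A - (q:ℝ) • 1) * (A - L • 1) = 0 := by
    rw [hA', Matrix.mul_sub, hJA, Matrix.mul_smul, mul_one, sub_self]
  have hfac : (A - s • 1) * (A + s • 1) = A * A - (q:ℝ) • 1 := by
    simp only [sub_mul, mul_add, Matrix.smul_mul, Matrix.mul_smul, one_mul, mul_one, smul_smul]
    rw [← hs2]
    module
  have hfac' : (A + s • 1) * (A - s • 1) = A * A - (q:ℝ) • 1 := by
    simp only [add_mul, mul_sub, Matrix.smul_mul, Matrix.mul_smul, one_mul, mul_one, smul_smul]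
    rw [← hs2]
    module
  set f := Matrix.toLin' A with hf
  have hmem : ∀ (μ : ℝ) (x : Fin n → ℝ),
      x ∈ Module.End.eigenspace f μ ↔ A *ᵥ x = μ • x := by
    intro μ x
    rw [Module.End.mem_eigenspace_iff, hf, Matrix.toLin'_apply]
  -- the three eigenvalues
  set g : Fin 3 → ℝ := ![L, s, -s] with hg
  set N : Fin 3 → Submodule ℝ (Fin n → ℝ) := fun i => Module.End.eigenspace f (g i) with hN
  -- the three projectors
  set c2 : ℝ := (2 * s * (s - L))⁻¹ with hc2
  set c3 : ℝ := (2 * s * (s + L))⁻¹ with hc3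
  set M1 : Matrix (Fin n) (Fin n) ℝ := (n:ℝ)⁻¹ • ((A - s • 1) * (A + s • 1)) with hM1
  set M2 : Matrix (Fin n) (Fin n) ℝ := c2 • ((A + s • 1) * (A - L • 1)) with hM2
  set M3 : Matrix (Fin n) (Fin n) ℝ := c3 • ((A - s • 1) * (A - L • 1)) with hM3
  have hne : (n:ℝ) ≠ 0 := Nat.cast_ne_zero.mpr hnpos.ne'
  have hsL1 : s - L ≠ 0 := by intro h; nlinarith
  have hsL2 : s + L ≠ 0 := by nlinarith
  have hs0' : s ≠ 0 := hs0.ne'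
  have hnsum : (n:ℝ) = (L - s) * (L + s) := by
    rw [hnR]; nlinarith [hs2]
  have hLs : L - s ≠ 0 := by intro h; nlinarith
  have hLs' : L + s ≠ 0 := by nlinarith
  -- sum of projectors is the identity
  have hsumM : M1 + M2 + M3 = 1 := by
    have e2 : (A + s • 1) * (A - L • 1) = A * A + (s - L) • A - (s * L) • 1 := by
      simp only [add_mul, mul_sub, Matrix.smul_mul, Matrix.mul_smul, one_mul, mul_one, smul_smul]
      module
    have e3 : (A - s • 1) * (A - L • 1) = A * A - (s + L) • A + (s * L) • 1 := by
      simp only [sub_mul, mul_sub, Matrix.smul_mul, Matrix.mul_smul, one_mul, mul_one, smul_smul]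
      module
    rw [hM1, hM2, hM3, hfac, e2, e3, hc2, hc3, hnsum, ← hs2]
    match_scalars
    · field_simp
      ring
    · field_simp
      ring
    · field_simp
      ring
  -- A * Mi = eigenvalue • Mi
  have hAM1 : A * M1 = L • M1 := by
    rw [hM1, Matrix.mul_smul, hfac, hA', hAJ, smul_comm]
  have hAM2 : A * M2 = s • M2 := by
    have h0 : (A - s • 1) * ((A + s • 1) * (A - L • 1)) = 0 := by
      rw [← Matrix.mul_assoc, hfac, key1]
    have h1 : A * ((A + s • 1) * (A - L • 1)) = (s • 1) * ((A + s • 1) * (A - L • 1)) :=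
      sub_eq_zero.mp (by rw [← sub_mul]; exact h0)
    rw [hM2, Matrix.mul_smul, h1, Matrix.smul_mul, one_mul]
    module
  have hAM3 : A * M3 = (-s) • M3 := by
    have h0 : (A + s • 1) * ((A - s • 1) * (A - L • 1)) = 0 := by
      rw [← Matrix.mul_assoc, hfac', key1]
    have h1 : A * ((A - s • 1) * (A - L • 1)) = (-(s • 1)) * ((A - s • 1) * (A - L • 1)) :=
      sub_eq_zero.mp (by rw [Matrix.neg_mul, sub_neg_eq_add, ← add_mul]; exact h0)
    rw [hM3, Matrix.mul_smul, h1, Matrix.neg_mul, Matrix.smul_mul, one_mul]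
    module
  -- memberships
  have hmemM : ∀ (v : Fin n → ℝ) (M : Matrix (Fin n) (Fin n) ℝ) (μ : ℝ),
      A * M = μ • M → M *ᵥ v ∈ Module.End.eigenspace f μ := by
    intro v M μ hAM
    rw [hmem, Matrix.mulVec_mulVec, hAM, Matrix.smul_mulVec]
  -- the supremum is everything
  have hsup : ⨆ i, N i = ⊤ := by
    rw [eq_top_iff]
    intro v _
    have hv : v = M1 *ᵥ v + M2 *ᵥ v + M3 *ᵥ v := by
      rw [← Matrix.add_mulVec, ← Matrix.add_mulVec, hsumM, Matrix.one_mulVec]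
    rw [hv]
    refine add_mem (add_mem ?_ ?_) ?_
    · exact Submodule.mem_iSup_of_mem 0 (hmemM v M1 L hAM1)
    · exact Submodule.mem_iSup_of_mem 1 (hmemM v M2 s hAM2)
    · exact Submodule.mem_iSup_of_mem 2 (hmemM v M3 (-s) hAM3)
  have hginj : Function.Injective g := by
    intro i j hij
    fin_cases i <;> fin_cases j <;>
      first
        | rfl
        | (exfalso; rw [hg] at hij; simp at hij; linarith)
  have hind : iSupIndep N := (Module.End.eigenspaces_iSupIndep f).comp hginj
  have hInt : DirectSum.IsInternal N :=
    (DirectSum.isInternal_submodule_iff_iSupIndep_and_iSup_eq_top N).mpr ⟨hind, hsup⟩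
  -- finrank of N 0 is 1
  set uvec : Fin n → ℝ := fun _ => 1 with huvec
  have huvec0 : uvec ≠ 0 := by
    intro h
    have := congrFun h ⟨0, hnpos⟩
    simp [huvec] at this
  have huvecL : uvec ∈ Module.End.eigenspace f L := by
    rw [hmem]
    ext i
    simp only [Matrix.mulVec, dotProduct, huvec, mul_one, Pi.smul_apply, smul_eq_mul]
    exact hrow i
  have hE1 : Module.End.eigenspace f L = Submodule.span ℝ {uvec} := by
    apply le_antisymm
    · intro v hv
      rw [hmem] at hv
      have h1 : A *ᵥ (A *ᵥ v) = (L * L) • v := by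
        rw [hv, Matrix.mulVec_smul, hv, smul_smul]
      have h2 : A *ᵥ (A *ᵥ v) = Jm *ᵥ v + (q:ℝ) • v := by
        rw [Matrix.mulVec_mulVec, hA, Matrix.add_mulVec, Matrix.smul_mulVec,
          Matrix.one_mulVec]
      have h3 : Jm *ᵥ v = (∑ j, v j) • uvec := by
        ext i
        simp [Matrix.mulVec, dotProduct, hJm, huvec]
      have h4 : (n:ℝ) • v = (∑ j, v j) • uvec := by
        rw [← h3]
        have h5 : (L * L - (q:ℝ)) • v = Jm *ᵥ v := by
          rw [sub_smul, ← h1, h2]; abel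
        rw [← h5]
        congr 1
        rw [hL, hnR]; ring
      have h6 : v = ((n:ℝ)⁻¹ * ∑ j, v j) • uvec := by
        rw [mul_smul, ← h4, smul_smul, inv_mul_cancel₀ hne, one_smul]
      rw [h6]
      exact Submodule.smul_mem _ _ (Submodule.mem_span_singleton_self uvec)
    · rw [Submodule.span_le, Set.singleton_subset_iff]
      exact huvecL
  have hrk0 : Module.finrank ℝ (N 0) = 1 := by
    show Module.finrank ℝ (Module.End.eigenspace f (g 0)) = 1
    have hg0 : g 0 = L := rfl
    rw [hg0, hE1]
    exact finrank_span_singleton huvec0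
  -- finrank sum
  have hrksum : Module.finrank ℝ (N 0) + Module.finrank ℝ (N 1) + Module.finrank ℝ (N 2) = n := by
    have e : (⨁ i, N i) ≃ₗ[ℝ] (Fin n → ℝ) :=
      LinearEquiv.ofBijective (DirectSum.coeLinearMap N) hInt
    have h1 : Module.finrank ℝ (⨁ i, N i) = Module.finrank ℝ (Fin n → ℝ) := e.finrank_eq
    rw [Module.finrank_directSum, Module.finrank_pi, Fintype.card_fin, Fin.sum_univ_three] at h1
    exact h1
  -- trace
  have hmaps : ∀ i, Set.MapsTo f (N i) (N i) := by
    intro i x hx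
    have hx' : x ∈ N i := hx
    have hfx : f x = g i • x := Module.End.mem_eigenspace_iff.mp hx'
    show f x ∈ N i
    rw [hfx]
    exact Submodule.smul_mem _ _ hx'
  have htrace : A.trace = ∑ i, g i * Module.finrank ℝ (N i) := by
    have h1 : LinearMap.trace ℝ (Fin n → ℝ) f = A.trace := by
      rw [hf, LinearMap.trace_eq_matrix_trace ℝ (Pi.basisFun ℝ (Fin n)),
        LinearMap.toMatrix_eq_toMatrix', LinearMap.toMatrix'_toLin']
    rw [← h1, LinearMap.trace_eq_sum_trace_restrict hInt hmaps]
    refine Finset.sum_congr rfl fun i _ => ?_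
    have hres : f.restrict (hmaps i) = (g i) • LinearMap.id := by
      refine LinearMap.ext fun x => Subtype.ext ?_
      simp only [LinearMap.restrict_coe_apply, LinearMap.smul_apply, LinearMap.id_coe, id_eq,
        SetLike.val_smul]
      exact Module.End.mem_eigenspace_iff.mp x.2
    rw [hres, LinearMap.map_smul, LinearMap.trace_id, smul_eq_mul]
  constructor
  · exact hrk0
  · intro a b ha hb
    have ha' : a = Module.finrank ℝ (N 1) := ha
    have hb' : b = Module.finrank ℝ (N 2) := hb
    have h5 : 1 + (a + b) = n := by
      rw [ha', hb', ← hrk0, ← add_assoc]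
      exact hrksum
    constructor
    · rw [hn] at h5
      omega
    · rw [htrace, Fin.sum_univ_three]
      have hg0 : g 0 = L := rfl
      have hg1 : g 1 = s := rfl
      have hg2 : g 2 = -s := rfl
      rw [hg0, hg1, hg2, hrk0, ← ha', ← hb']
      push_cast
      ring
end

section
/- Let G be a (q+1)-regular graph (loops allowed, each loop contributing 1 to degree) on n = q² + q + 1 vertices whose adjacency matrix A satisfies A² = J + qI. Then for every subset S of vertices, the number of edges inside S (counting loops) is at least (q+1)|S|²/(2n) - √q·|S|/2. -/
/-!
Write the indicator vector of `S` as `x = y + (|S| / n) • 𝟙` with `∑ y = 0`. Since `A 𝟙 = (q + 1) 𝟙`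
and `A` is symmetric, `xᵀ A x = yᵀ A y + (q + 1) |S|² / n`. As `J y = 0`, `A² y = q y`, so
`‖A y‖² = q ‖y‖²` and Cauchy–Schwarz gives `|yᵀ A y| ≤ √q ‖y‖² ≤ √q |S|`. Loops only add the
nonnegative diagonal.
-/

open Matrix

theorem dotProduct_sq_le_dotProduct_self_mul {ι : Type*} [Fintype ι] (v w : ι → ℝ) :
    (v ⬝ᵥ w) ^ 2 ≤ (v ⬝ᵥ v) * (w ⬝ᵥ w) := by
  simpa only [dotProduct, sq] using Finset.sum_mul_sq_le_sq_mul_sq Finset.univ v w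

section

variable {ι : Type*} [Fintype ι]

noncomputable def centered (x : ι → ℝ) : ι → ℝ := x - ((∑ i, x i) / Fintype.card ι) • 1

theorem sum_centered (x : ι → ℝ) : ∑ i, centered x i = 0 := by
  rcases isEmpty_or_nonempty ι with _ | _
  · simp
  · have hcard : (Fintype.card ι : ℝ) ≠ 0 := by positivity
    simp [centered, Finset.sum_sub_distrib, mul_div_cancel₀ _ hcard]

theorem centered_dotProduct_self (x : ι → ℝ) :
    centered x ⬝ᵥ centered x = x ⬝ᵥ x - (∑ i, x i) ^ 2 / Fintype.card ι := by
  nth_rw 2 [centered]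
  rw [dotProduct_sub, dotProduct_smul, dotProduct_one, sum_centered, smul_zero, sub_zero, centered,
    sub_dotProduct, smul_dotProduct, one_dotProduct, smul_eq_mul]
  ring

theorem centered_dotProduct_self_le (x : ι → ℝ) : centered x ⬝ᵥ centered x ≤ x ⬝ᵥ x := by
  rw [centered_dotProduct_self, sub_le_self_iff]
  positivity

theorem dotProduct_mulVec_eq_centered_add {A : Matrix ι ι ℝ} (hA : A.IsSymm) {d : ℝ}
    (hreg : A *ᵥ 1 = d • 1) (x : ι → ℝ) :
    x ⬝ᵥ A *ᵥ x = centered x ⬝ᵥ A *ᵥ centered x + d * (∑ i, x i) ^ 2 / Fintype.card ι := by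
  have hcol : 1 ᵥ* A = d • 1 := by rw [← hA.eq, vecMul_transpose, hreg]
  set c := (∑ i, x i) / Fintype.card ι
  have hx : x = centered x + c • 1 := (sub_add_cancel _ _).symm
  have hcross : 1 ⬝ᵥ A *ᵥ centered x = 0 := by
    rw [dotProduct_mulVec, hcol, smul_dotProduct, one_dotProduct, sum_centered, smul_zero]
  conv_lhs => rw [hx]
  simp only [mulVec_add, mulVec_smul, hreg, dotProduct_add, add_dotProduct, smul_dotProduct,
      dotProduct_smul, hcross, dotProduct_one, smul_eq_mul]
  rw [← hx]
  ring

theorem abs_dotProduct_mulVec_le {A : Matrix ι ι ℝ} (hA : A.IsSymm) {q : ℝ} {y : ι → ℝ}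
    (hy : (A * A) *ᵥ y = q • y) : |y ⬝ᵥ A *ᵥ y| ≤ √q * (y ⬝ᵥ y) := by
  have hAy : (A *ᵥ y) ⬝ᵥ (A *ᵥ y) = q * (y ⬝ᵥ y) := by
    have hsymm : A *ᵥ y = y ᵥ* A := by rw [← vecMul_transpose, hA.eq]
    nth_rw 1 [hsymm]
    rw [← dotProduct_mulVec, mulVec_mulVec, hy, dotProduct_smul, smul_eq_mul]
  have hyy : 0 ≤ y ⬝ᵥ y := Finset.sum_nonneg fun i _ => mul_self_nonneg (y i)
  calc |y ⬝ᵥ A *ᵥ y| ≤ √(q * (y ⬝ᵥ y) ^ 2) := by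
        refine Real.abs_le_sqrt ?_
        simpa only [hAy, sq, mul_left_comm] using dotProduct_sq_le_dotProduct_self_mul y (A *ᵥ y)
    _ = √q * (y ⬝ᵥ y) := by
        rw [Real.sqrt_mul' _ (sq_nonneg _), Real.sqrt_sq hyy]

theorem mul_self_mulVec_of_sum_eq_zero [DecidableEq ι] {A : Matrix ι ι ℝ} {q : ℝ}
    (hA : A * A = of (fun _ _ => (1 : ℝ)) + q • (1 : Matrix ι ι ℝ)) {y : ι → ℝ}
    (hy : ∑ i, y i = 0) : (A * A) *ᵥ y = q • y := by
  rw [hA, add_mulVec, smul_mulVec, one_mulVec, add_eq_right]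
  ext i
  simp [mulVec, dotProduct, hy]

end

theorem edges_in_subset_lower_bound_general (n : ℕ) (q : ℝ)
    (A : Matrix (Fin n) (Fin n) ℝ) (hsym : A.IsSymm)
    (h01 : ∀ i j, A i j = 0 ∨ A i j = 1)
    (hreg : ∀ i, ∑ j, A i j = q + 1)
    (hA : A * A = Matrix.of (fun _ _ => (1 : ℝ)) + q • (1 : Matrix (Fin n) (Fin n) ℝ))
    (S : Finset (Fin n)) :
    ((∑ i ∈ S, ∑ j ∈ S, A i j) + ∑ i ∈ S, A i i) / 2 ≥
      (q + 1) * (S.card : ℝ) ^ 2 / (2 * n) - Real.sqrt q * S.card / 2 := by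
  set x : Fin n → ℝ := fun i => if i ∈ S then 1 else 0
  have hsum : ∑ i, x i = S.card := by simp [x]
  have hnorm : x ⬝ᵥ x = S.card := by simp [x, dotProduct]
  have hedges : x ⬝ᵥ A *ᵥ x = ∑ i ∈ S, ∑ j ∈ S, A i j := by
    simp [x, dotProduct, mulVec, Finset.sum_ite_mem]
  have hrow : A *ᵥ 1 = (q + 1) • 1 := by
    ext i
    simp [mulVec, dotProduct, hreg]
  have hquad := dotProduct_mulVec_eq_centered_add hsym hrow x
  have hspec := abs_dotProduct_mulVec_le hsym
    (mul_self_mulVec_of_sum_eq_zero hA (sum_centered x))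
  have hcentered : centered x ⬝ᵥ centered x ≤ S.card := hnorm ▸ centered_dotProduct_self_le x
  have hbound : -(√q * S.card) ≤ centered x ⬝ᵥ A *ᵥ centered x :=
    calc -(√q * S.card) ≤ -(√q * (centered x ⬝ᵥ centered x)) :=
          neg_le_neg (mul_le_mul_of_nonneg_left hcentered (Real.sqrt_nonneg q))
      _ ≤ _ := neg_le_of_abs_le hspec
  have hloops : 0 ≤ ∑ i ∈ S, A i i :=
    Finset.sum_nonneg fun i _ => by rcases h01 i i with h | h <;> simp [h]
  rw [hedges, hsum, Fintype.card_fin] at hquad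
  have hhalf : (q + 1) * (S.card : ℝ) ^ 2 / (2 * n) = (q + 1) * S.card ^ 2 / n / 2 := by ring
  linarith

/-- Expander-mixing-type lower bound for polarity graphs: if `G` is a `(q+1)`-regular graph
(loops allowed, a loop adding `1` to the degree) on `n = q ^ 2 + q + 1` vertices whose 0-1
adjacency matrix `A` (with `A v v = 1` iff `v` has a loop) satisfies `A ^ 2 = J + q • I`, then
for every vertex subset `S`, the number of edges inside `S` (loops counted once), which equals
`((∑ i ∈ S, ∑ j ∈ S, A i j) + ∑ i ∈ S, A i i) / 2`, is at least
`(q + 1) |S| ^ 2 / (2 n) - √q |S| / 2`. -/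
theorem edges_in_subset_lower_bound (n : ℕ) (q : ℝ) (hq : 0 < q)
    (hn : (n : ℝ) = q ^ 2 + q + 1)
    (A : Matrix (Fin n) (Fin n) ℝ) (hsym : A.IsSymm)
    (h01 : ∀ i j, A i j = 0 ∨ A i j = 1)
    (hreg : ∀ i, ∑ j, A i j = q + 1)
    (hA : A * A = Matrix.of (fun _ _ => (1 : ℝ)) + q • (1 : Matrix (Fin n) (Fin n) ℝ))
    (S : Finset (Fin n)) :
    ((∑ i ∈ S, ∑ j ∈ S, A i j) + ∑ i ∈ S, A i i) / 2 ≥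
      (q + 1) * (S.card : ℝ) ^ 2 / (2 * n) - Real.sqrt q * S.card / 2 :=
  edges_in_subset_lower_bound_general n q A hsym h01 hreg hA S
end

section
/- Let G be a polarity graph of a projective plane of order q with an oval H, and for S ⊆ H let Y_S be the set of vertices adjacent to exactly 2 vertices of S. Then |Y_S| = C(|S|, 2). -/
open Configuration

/-- Let `G` be the polarity graph of a projective plane of order `q` (vertices are the points,
`v ~ w` iff `v ∈ π w` for a polarity `π`), and let `H` be an oval (a set of `q + 1` points, no
three collinear). For `S ⊆ H`, the set `Y_S` of vertices adjacent to exactly two vertices of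
`S` has size `C(|S|, 2)`. -/
theorem polarity_graph_YS_card (P L : Type*) [Membership P L] [ProjectivePlane P L]
    [Fintype P] [Fintype L] [∀ (p : P) (l : L), Decidable (p ∈ l)]
    (q : ℕ) (hq : ProjectivePlane.order P L = q)
    (π : P ≃ L) (hπ : ∀ p r : P, p ∈ π r ↔ r ∈ π p)
    (H : Finset P) (hH : H.card = q + 1)
    (harc : ∀ l : L, (H.filter (· ∈ l)).card ≤ 2)
    (S : Finset P) (hS : S ⊆ H) :
    (Finset.univ.filter (fun v : P => (S.filter (fun s => v ∈ π s)).card = 2)).card =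
      S.card.choose 2 := by
  classical
  -- For any v, the set of s ∈ S with v ∈ π s is contained in H ∩ π v
  have key : ∀ v : P, S.filter (fun s => v ∈ π s) ⊆ H.filter (· ∈ π v) := by
    intro v s hs
    rw [Finset.mem_filter] at hs ⊢
    exact ⟨hS hs.1, (hπ v s).mp hs.2⟩
  have keycard : ∀ v : P, (S.filter (fun s => v ∈ π s)).card ≤ 2 := fun v =>
    (Finset.card_le_card (key v)).trans (harc (π v))
  rw [← Finset.card_powersetCard]
  apply Finset.card_bij (fun v _ => S.filter (fun s => v ∈ π s))
  · intro v hv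
    rw [Finset.mem_filter] at hv
    rw [Finset.mem_powersetCard]
    exact ⟨Finset.filter_subset _ _, hv.2⟩
  · intro v hv w hw h
    rw [Finset.mem_filter] at hv hw
    obtain ⟨s, t, hst, hpair⟩ := Finset.card_eq_two.mp hv.2
    have hsv : s ∈ S.filter (fun s => v ∈ π s) := by rw [hpair]; simp
    have htv : t ∈ S.filter (fun s => v ∈ π s) := by rw [hpair]; simp
    have hsw : s ∈ S.filter (fun s => w ∈ π s) := by rw [← h, hpair]; simp
    have htw : t ∈ S.filter (fun s => w ∈ π s) := by rw [← h, hpair]; simp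
    rw [Finset.mem_filter] at hsv htv hsw htw
    have hlne : π s ≠ π t := fun hh => hst (π.injective hh)
    exact (Nondegenerate.eq_or_eq hsv.2 hsw.2 htv.2 htw.2).resolve_right hlne
  · intro t ht
    rw [Finset.mem_powersetCard] at ht
    obtain ⟨s₁, s₂, hne, hpair⟩ := Finset.card_eq_two.mp ht.2
    have hlne : π s₁ ≠ π s₂ := fun hh => hne (π.injective hh)
    set v := HasPoints.mkPoint (P := P) hlne with hv
    have hmem := HasPoints.mkPoint_ax (P := P) hlne
    have hsub : t ⊆ S.filter (fun s => v ∈ π s) := by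
      intro x hx
      rw [hpair] at hx
      rw [Finset.mem_filter]
      rcases Finset.mem_insert.mp hx with h | h
      · exact ⟨ht.1 (by rw [hpair]; exact hx), h ▸ hmem.1⟩
      · exact ⟨ht.1 (by rw [hpair]; exact hx), (Finset.mem_singleton.mp h) ▸ hmem.2⟩
    have hcard : (S.filter (fun s => v ∈ π s)).card = 2 :=
      le_antisymm (keycard _) (ht.2 ▸ Finset.card_le_card hsub)
    exact ⟨v, Finset.mem_filter.mpr ⟨Finset.mem_univ _, hcard⟩,
      (Finset.eq_of_subset_of_card_le hsub (by rw [hcard, ht.2])).symm⟩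
end

section
/- For every n ≥ 1, any C₄-free graph on n vertices has at most (1/2)n^{3/2} + (1/2)n edges. -/
/-!
Two distinct vertices of a `C₄`-free graph have at most one common neighbour, so counting the
ordered pairs of neighbours of every vertex gives `∑ d(v)² ≤ 2e + n(n - 1)`. Cauchy–Schwarz turns
this into the quadratic inequality `4e² ≤ n(2e + n(n - 1))`, whose positive root is at most
`(n^{3/2} + n) / 2`.
-/

open Finset Fintype

theorem le_half_mul_sqrt_add_half_of_sq_le {m n : ℝ} (hn : 0 ≤ n)
    (h : 4 * m ^ 2 ≤ n * (2 * m + n * (n - 1))) : m ≤ n * √n / 2 + n / 2 := by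
  obtain ⟨s, hs, rfl⟩ : ∃ s, 0 ≤ s ∧ n = s ^ 2 := ⟨√n, Real.sqrt_nonneg n, (Real.sq_sqrt hn).symm⟩
  rw [Real.sqrt_sq hs]
  nlinarith [sq_nonneg (2 * m - s ^ 3 - s ^ 2), pow_nonneg hs 4, pow_nonneg hs 5]

namespace SimpleGraph

variable {V : Type*} [Fintype V] [DecidableEq V] (G : SimpleGraph V) [DecidableRel G.Adj]

theorem sum_sum_card_neighborFinset_inter :
    ∑ a, ∑ b, #(G.neighborFinset a ∩ G.neighborFinset b) = ∑ v, G.degree v ^ 2 := by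
  simp_rw [sq, ← card_neighborFinset_eq_degree, ← card_product, card_eq_sum_ones,
    ← Fintype.sum_prod_type']
  exact sum_comm' fun p v => by simp [adj_comm, and_comm]

theorem card_neighborFinset_inter_le_one
    (hC4free : ∀ a b c d, G.Adj a b → G.Adj b c → G.Adj c d → G.Adj d a → a = c ∨ b = d)
    {a b : V} (hab : a ≠ b) : #(G.neighborFinset a ∩ G.neighborFinset b) ≤ 1 := by
  refine card_le_one.2 fun x hx y hy => ?_
  simp only [mem_inter, mem_neighborFinset] at hx hy
  exact (hC4free a x b y hx.1 hx.2.symm hy.2 hy.1.symm).resolve_left hab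

theorem sum_degree_sq_le
    (hC4free : ∀ a b c d, G.Adj a b → G.Adj b c → G.Adj c d → G.Adj d a → a = c ∨ b = d) :
    ∑ v, G.degree v ^ 2 ≤ 2 * #G.edgeFinset + card V * (card V - 1) := by
  rw [← sum_sum_card_neighborFinset_inter, ← sum_degrees_eq_twice_card_edges, ← card_univ,
    ← smul_eq_mul, ← sum_const, ← sum_add_distrib]
  refine sum_le_sum fun a _ => ?_
  rw [← add_sum_erase _ _ (mem_univ a), inter_self, card_neighborFinset_eq_degree]
  gcongr
  calc ∑ b ∈ univ.erase a, #(G.neighborFinset a ∩ G.neighborFinset b)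
      ≤ #(univ.erase a) • 1 := sum_le_card_nsmul _ _ 1 fun b hb =>
        G.card_neighborFinset_inter_le_one hC4free (ne_of_mem_erase hb).symm
    _ = #univ - 1 := by simp

theorem card_edgeFinset_le_of_C4free
    (hC4free : ∀ a b c d, G.Adj a b → G.Adj b c → G.Adj c d → G.Adj d a → a = c ∨ b = d) :
    (#G.edgeFinset : ℝ) ≤ card V * √(card V) / 2 + card V / 2 := by
  have hquad : (2 * #G.edgeFinset) ^ 2 ≤
      card V * (2 * #G.edgeFinset + (card V * card V - card V)) :=
    calc (2 * #G.edgeFinset) ^ 2 = (∑ v, G.degree v) ^ 2 := by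
          rw [sum_degrees_eq_twice_card_edges]
      _ ≤ card V * ∑ v, G.degree v ^ 2 := by
          simpa using sq_sum_le_card_mul_sum_sq (s := univ) (f := fun v => G.degree v)
      _ ≤ _ := by
          rw [← Nat.mul_sub_one]
          exact Nat.mul_le_mul_left _ (G.sum_degree_sq_le hC4free)
  have hquadR := (Nat.cast_le (α := ℝ)).2 hquad
  push_cast [Nat.cast_sub (Nat.le_mul_self _)] at hquadR
  exact le_half_mul_sqrt_add_half_of_sq_le (by positivity) (by linarith)

end SimpleGraph

theorem kst_C4_general (n : ℕ) (G : SimpleGraph (Fin n)) [DecidableRel G.Adj]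
    (hC4free : ∀ a b c d : Fin n, G.Adj a b → G.Adj b c → G.Adj c d → G.Adj d a →
      a = c ∨ b = d) :
    (G.edgeFinset.card : ℝ) ≤ (1 / 2) * (n : ℝ) ^ ((3 : ℝ) / 2) + (1 / 2) * n := by
  have hrpow : (n : ℝ) ^ ((3 : ℝ) / 2) = n * √n := by
    rw [show (3 : ℝ) / 2 = 1 + 1 / 2 by norm_num, Real.rpow_add' (by positivity) (by norm_num),
      Real.rpow_one, Real.sqrt_eq_rpow]
  have hbound := G.card_edgeFinset_le_of_C4free hC4free
  rw [Fintype.card_fin] at hbound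
  rw [hrpow]
  linarith

/-- Kővári–Sós–Turán bound for `C₄`: any `C₄`-free graph on `n ≥ 1` vertices has at most
`(1/2) n^(3/2) + (1/2) n` edges.  (`C₄`-free: there are no four distinct vertices
`a, b, c, d` with `a ~ b`, `b ~ c`, `c ~ d`, `d ~ a`; for a simple graph this is equivalent
to the disjunction `a = c ∨ b = d` below.) -/
theorem kst_C4 (n : ℕ) (hn : 1 ≤ n) (G : SimpleGraph (Fin n)) [DecidableRel G.Adj]
    (hC4free : ∀ a b c d : Fin n, G.Adj a b → G.Adj b c → G.Adj c d → G.Adj d a →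
      a = c ∨ b = d) :
    (G.edgeFinset.card : ℝ) ≤ (1 / 2) * (n : ℝ) ^ ((3 : ℝ) / 2) + (1 / 2) * n :=
  kst_C4_general n G hC4free
end

section
/- Let G be a polarity graph of a projective plane of order q containing an oval H, and let m ∈ {1, ..., q+1}. Then G contains a subgraph on at most m + C(m,2) vertices with at least 2·C(m,2) + m(m-1)(m-2)(m-3)/(8q) - C·(m⁴/q^{3/2} + m) edges, for some absolute constant C. -/
/-!
Take `S ⊆ H` with `#S = m` and let `T` be `S` together with the poles of the `C(m, 2)` secants
of `S`. Each `a ∈ S` is adjacent to the pole of every secant through `a`, which gives about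
`m (m - 1)` edges. Further edges join adjacent poles `x, y ∉ H` of two disjoint secants whose
four points lie in `S`. By the expander mixing bound the `q (q + 1) / 2` poles of secants of `H`
span about `q³ / 4` such ordered pairs, and averaging over `S` keeps a proportion
`m (m - 1) (m - 2) (m - 3) / ((q + 1) q (q - 1) (q - 2))` of them.
-/

open Configuration Finset

section Counting

variable {α β : Type*} [DecidableEq α]

theorem card_le_two_mul_card_of_forall_sym2_mk_mem {D : Finset (α × α)} {E : Finset (Sym2 α)}
    (h : ∀ p ∈ D, s(p.1, p.2) ∈ E) : #D ≤ 2 * #E := by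
  refine card_le_mul_card_image_of_maps_to h 2 fun e _ => ?_
  induction e using Sym2.ind with
  | _ x y =>
    calc #{p ∈ D | s(p.1, p.2) = s(x, y)} ≤ #{(x, y), (y, x)} := by
          refine card_le_card fun p hp => ?_
          rcases Sym2.eq_iff.mp (mem_filter.mp hp).2 with ⟨h₁, h₂⟩ | ⟨h₁, h₂⟩ <;> simp [← h₁, ← h₂]
      _ ≤ 2 := card_le_two

theorem Nat.choose_sub_mul_descFactorial {n m k : ℕ} (hkm : k ≤ m) :
    (n - k).choose (m - k) * n.descFactorial k = n.choose m * m.descFactorial k := by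
  rw [Nat.descFactorial_eq_factorial_mul_choose, Nat.descFactorial_eq_factorial_mul_choose,
    mul_left_comm (n.choose m), Nat.choose_mul hkm]
  ring

theorem Nat.cast_descFactorial_four {R : Type*} [CommRing R] (n : ℕ) :
    (n.descFactorial 4 : R) = n * (n - 1) * (n - 2) * (n - 3) := by
  rw [← descPochhammer_eval_eq_descFactorial]
  simp [descPochhammer_succ_right, mul_sub]

/-- Averaging over the `m`-subsets `S` of `H`: a fixed `k`-subset of `H` lies in a proportion
`m.descFactorial k / (#H).descFactorial k` of them. -/
theorem exists_mem_powersetCard_mul_descFactorial_le (H : Finset α) (D : Finset β)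
    (B : β → Finset α) {k m : ℕ} (hB : ∀ b ∈ D, B b ⊆ H ∧ #(B b) = k) (hkm : k ≤ m)
    (hm : m ≤ #H) :
    ∃ S ∈ H.powersetCard m, #D * m.descFactorial k ≤ #{b ∈ D | B b ⊆ S} * (#H).descFactorial k := by
  have hsum : ∑ S ∈ H.powersetCard m, #{b ∈ D | B b ⊆ S} = #D * (#H - k).choose (m - k) := by
    have := sum_card_bipartiteAbove_eq_sum_card_bipartiteBelow (s := D) (t := H.powersetCard m)
      (r := fun b S => B b ⊆ S)
    simp only [bipartiteAbove, bipartiteBelow] at this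
    rw [← this, card_eq_sum_ones, sum_mul, one_mul]
    refine sum_congr rfl fun b hb => ?_
    obtain ⟨hBH, hBk⟩ := hB b hb
    rw [card_filter_powersetCard_subset _ _ _ hBH (hBk ▸ hkm), hBk]
  obtain ⟨S, hS, hle⟩ := exists_le_of_sum_le (powersetCard_nonempty.mpr hm)
    (f := fun _ => #D * (#H - k).choose (m - k) * (#H).descFactorial k)
    (g := fun S => #(H.powersetCard m) * #{b ∈ D | B b ⊆ S} * (#H).descFactorial k)
    (le_of_eq (by rw [sum_const, ← sum_mul, ← mul_sum, hsum, smul_eq_mul]; ring))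
  refine ⟨S, hS, Nat.le_of_mul_le_mul_left ?_ (Nat.choose_pos hm)⟩
  rw [card_powersetCard] at hle
  calc (#H).choose m * (#D * m.descFactorial k)
      = #D * ((#H - k).choose (m - k) * (#H).descFactorial k) := by
        rw [Nat.choose_sub_mul_descFactorial hkm]; ring
    _ ≤ _ := by linarith

end Counting

namespace PolarityGraph

variable {P L : Type*} [Membership P L]

def IsPolarity (π : P ≃ L) : Prop := ∀ p r : P, p ∈ π r ↔ r ∈ π p

variable (L) in
def IsArc [∀ (p : P) (l : L), Decidable (p ∈ l)] (H : Finset P) : Prop :=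
  ∀ l : L, #{p ∈ H | p ∈ l} ≤ 2

def polarTrace (π : P ≃ L) [∀ (p : P) (l : L), Decidable (p ∈ l)] (H : Finset P) (x : P) :
    Finset P :=
  {a ∈ H | a ∈ π x}

def separatedPairs [∀ (p : P) (l : L), Decidable (p ∈ l)] [DecidableEq P] (π : P ≃ L)
    (H A : Finset P) : Finset (P × P) :=
  {p ∈ A ×ˢ A | p.2 ∈ π p.1 ∧ p.1 ∉ H ∧ p.2 ∉ H ∧
    Disjoint (polarTrace π H p.1) (polarTrace π H p.2)}

section Poles

variable [HasLines P L]

open Classical in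
/-- Junk value `a` when `a = b`. -/
noncomputable def pole (π : P ≃ L) (a b : P) : P :=
  if h : a ≠ b then π.symm (HasLines.mkLine h) else a

variable {π : P ≃ L} {a b : P}

theorem mem_pole_left (h : a ≠ b) : a ∈ π (pole π a b) := by
  simpa [pole, h] using (HasLines.mkLine_ax h).1

theorem mem_pole_right (h : a ≠ b) : b ∈ π (pole π a b) := by
  simpa [pole, h] using (HasLines.mkLine_ax h).2

theorem pole_comm (h : a ≠ b) : pole π b a = pole π a b :=
  π.injective <| ((Nondegenerate.eq_or_eq (mem_pole_left h) (mem_pole_right h)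
    (mem_pole_right h.symm) (mem_pole_left h.symm)).resolve_left h).symm

variable [∀ (p : P) (l : L), Decidable (p ∈ l)] [DecidableEq P] {H S : Finset P} {x : P}

theorem polarTrace_pole (hH : IsArc L H) (ha : a ∈ H) (hb : b ∈ H) (h : a ≠ b) :
    polarTrace π H (pole π a b) = {a, b} := by
  refine (eq_of_subset_of_card_le (fun x hx => ?_) ?_).symm
  · rcases mem_insert.mp hx with rfl | hx
    · exact mem_filter.mpr ⟨ha, mem_pole_left h⟩
    · rw [mem_singleton.mp hx]
      exact mem_filter.mpr ⟨hb, mem_pole_right h⟩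
  · rw [card_pair h]; exact hH _

theorem filter_pole_eq (hH : IsArc L H) (hS : S ⊆ H) (ha : a ∈ S) (hb : b ∈ S) (h : a ≠ b) :
    {p ∈ S.offDiag | pole π p.1 p.2 = pole π a b} = {(a, b), (b, a)} := by
  ext ⟨c, d⟩
  simp only [mem_filter, mem_offDiag, mem_insert, mem_singleton, Prod.mk.injEq]
  constructor
  · rintro ⟨⟨hc, hd, hcd⟩, hpole⟩
    have := polarTrace_pole (π := π) hH (hS hc) (hS hd) hcd
    rw [hpole, polarTrace_pole hH (hS ha) (hS hb) h] at this
    exact Set.pair_eq_pair_iff.mp (by simpa using congrArg ((↑) : Finset P → Set P) this.symm)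
  · rintro (⟨rfl, rfl⟩ | ⟨rfl, rfl⟩)
    · exact ⟨⟨ha, hb, h⟩, rfl⟩
    · exact ⟨⟨hb, ha, h.symm⟩, pole_comm h⟩

theorem card_filter_pole_eq_le_two (hH : IsArc L H) (hS : S ⊆ H) (x : P) :
    #{p ∈ S.offDiag | pole π p.1 p.2 = x} ≤ 2 := by
  rcases eq_empty_or_nonempty {p ∈ S.offDiag | pole π p.1 p.2 = x} with he | ⟨⟨a, b⟩, hab⟩
  · simp [he]
  obtain ⟨hmem, rfl⟩ := mem_filter.mp hab
  obtain ⟨ha, hb, h⟩ := mem_offDiag.mp hmem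
  rw [filter_pole_eq hH hS ha hb h]
  exact card_le_two

noncomputable def poles (π : P ≃ L) (S : Finset P) : Finset P :=
  S.offDiag.image fun p => pole π p.1 p.2

theorem two_mul_card_poles (hH : IsArc L H) (hS : S ⊆ H) : 2 * #(poles π S) = #S.offDiag := by
  rw [poles, card_eq_sum_card_image (fun p => pole π p.1 p.2) S.offDiag, mul_comm,
    ← smul_eq_mul, ← sum_const]
  refine sum_congr rfl fun x hx => ?_
  obtain ⟨⟨a, b⟩, hab, rfl⟩ := mem_image.mp hx
  obtain ⟨ha, hb, h⟩ := mem_offDiag.mp hab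
  rw [filter_pole_eq hH hS ha hb h, card_pair (by simp [h])]

theorem card_poles (hH : IsArc L H) (hS : S ⊆ H) : #(poles π S) = (#S).choose 2 := by
  have := two_mul_card_poles (π := π) hH hS
  rw [offDiag_card] at this
  rw [Nat.choose_two_right, Nat.mul_sub_one]
  omega

theorem card_polarTrace_of_mem_poles (hH : IsArc L H) (hx : x ∈ poles π H) :
    #(polarTrace π H x) = 2 := by
  obtain ⟨⟨a, b⟩, hab, rfl⟩ := mem_image.mp hx
  obtain ⟨ha, hb, h⟩ := mem_offDiag.mp hab
  rw [polarTrace_pole hH ha hb h, card_pair h]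

theorem mem_poles_of_polarTrace_subset (hH : IsArc L H) (hx : x ∈ poles π H)
    (hS : polarTrace π H x ⊆ S) : x ∈ poles π S := by
  obtain ⟨⟨a, b⟩, hab, rfl⟩ := mem_image.mp hx
  obtain ⟨ha, hb, h⟩ := mem_offDiag.mp hab
  rw [polarTrace_pole hH ha hb h, insert_subset_iff, singleton_subset_iff] at hS
  exact mem_image_of_mem _ (mem_offDiag.mpr ⟨hS.1, hS.2, h⟩)

theorem polarTrace_union_subset_and_card (hH : IsArc L H) {p : P × P}
    (hp : p ∈ separatedPairs π H (poles π H)) :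
    polarTrace π H p.1 ∪ polarTrace π H p.2 ⊆ H ∧
      #(polarTrace π H p.1 ∪ polarTrace π H p.2) = 4 := by
  obtain ⟨hpA, -, -, -, hdisj⟩ := mem_filter.mp hp
  obtain ⟨h₁, h₂⟩ := mem_product.mp hpA
  refine ⟨union_subset (filter_subset _ _) (filter_subset _ _), ?_⟩
  rw [card_union_of_disjoint hdisj, card_polarTrace_of_mem_poles hH h₁,
    card_polarTrace_of_mem_poles hH h₂]

noncomputable def poleEdges (π : P ≃ L) (S : Finset P) : Finset (Sym2 P) :=
  {p ∈ S.offDiag | pole π p.1 p.2 ∉ S}.image fun p => s(pole π p.1 p.2, p.1)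

theorem card_offDiag_le_card_poleEdges_add (hH : IsArc L H) (hS : S ⊆ H) :
    #S.offDiag ≤ #(poleEdges π S) + 2 * #S := by
  have hinj : Set.InjOn (fun p : P × P => s(pole π p.1 p.2, p.1))
      ({p ∈ S.offDiag | pole π p.1 p.2 ∉ S} : Finset _) := by
    rintro ⟨a, b⟩ hab ⟨c, d⟩ hcd he
    rw [mem_coe, mem_filter, mem_offDiag] at hab hcd
    rcases Sym2.eq_iff.mp he with ⟨hpole, rfl⟩ | ⟨hpole, -⟩
    · have := (filter_pole_eq hH hS hcd.1.1 hcd.1.2.1 hcd.1.2.2 ▸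
        mem_filter.mpr ⟨mem_offDiag.mpr hab.1, hpole⟩ : (a, b) ∈ ({(a, d), (d, a)} : Finset _))
      simp only [mem_insert, mem_singleton, Prod.mk.injEq] at this
      rcases this with ⟨-, rfl⟩ | ⟨-, hba⟩
      · rfl
      · exact absurd hba.symm hab.1.2.2
    · exact absurd (hpole ▸ hcd.1.1) hab.2
  have hbad : #{p ∈ S.offDiag | pole π p.1 p.2 ∈ S} ≤ 2 * #S := by
    refine card_le_mul_card_image_of_maps_to (fun p hp => (mem_filter.mp hp).2) 2 fun x _ => ?_
    refine (card_le_card fun p hp => ?_).trans (card_filter_pole_eq_le_two (π := π) hH hS x)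
    simp only [mem_filter] at hp ⊢
    exact ⟨hp.1.1, hp.2⟩
  rw [poleEdges, card_image_of_injOn hinj]
  have := card_filter_add_card_filter_not (s := S.offDiag) (fun p => pole π p.1 p.2 ∈ S)
  omega

end Poles

section Incidence

variable [ProjectivePlane P L] [Fintype P] [∀ (p : P) (l : L), Decidable (p ∈ l)]

open ProjectivePlane

theorem card_filter_mem_and_mem {l₁ l₂ : L} (h : l₁ ≠ l₂) : #{p : P | p ∈ l₁ ∧ p ∈ l₂} = 1 := by
  obtain ⟨p, hp, huniq⟩ := HasPoints.existsUnique_point P L l₁ l₂ h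
  exact card_eq_one.mpr ⟨p, by ext x; simpa using ⟨huniq x, fun hx => hx ▸ hp⟩⟩

variable [Fintype L]

theorem card_filter_mem (l : L) : #{p : P | p ∈ l} = order P L + 1 := by
  rw [← pointCount_eq P l, pointCount, Nat.card_eq_fintype_card, Fintype.card_subtype]

variable {π : P ≃ L}

theorem card_filter_mem_polar (hπ : IsPolarity π) (x : P) : #{v | x ∈ π v} = order P L + 1 := by
  simp_rw [hπ x]
  exact card_filter_mem (π x)

theorem card_filter_mem_polar_and_mem_polar [DecidableEq P] (hπ : IsPolarity π) (x y : P) :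
    #{v | x ∈ π v ∧ y ∈ π v} = if x = y then order P L + 1 else 1 := by
  split_ifs with h
  · simp_rw [h, and_self]
    exact card_filter_mem_polar hπ y
  · simp_rw [hπ x, hπ y]
    exact card_filter_mem_and_mem fun hxy => h (π.injective hxy)

theorem sum_card_filter_mem_polar (hπ : IsPolarity π) (A : Finset P) :
    ∑ v, #{x ∈ A | x ∈ π v} = #A * (order P L + 1) := by
  have := sum_card_bipartiteAbove_eq_sum_card_bipartiteBelow (s := univ) (t := A)
    (r := fun v x => x ∈ π v)
  simp only [bipartiteAbove, bipartiteBelow] at this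
  rw [this, sum_congr rfl fun x _ => card_filter_mem_polar hπ x, sum_const, smul_eq_mul]

theorem sum_card_filter_mem_polar_sq [DecidableEq P] (hπ : IsPolarity π) (A : Finset P) :
    ∑ v, #{x ∈ A | x ∈ π v} ^ 2 = #A ^ 2 + #A * order P L := by
  have hsq (v : P) : #{x ∈ A | x ∈ π v} ^ 2 = #{p ∈ A ×ˢ A | p.1 ∈ π v ∧ p.2 ∈ π v} := by
    rw [filter_product, card_product, sq]
  have := sum_card_bipartiteAbove_eq_sum_card_bipartiteBelow (s := univ) (t := A ×ˢ A)
    (r := fun v p => p.1 ∈ π v ∧ p.2 ∈ π v)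
  simp only [bipartiteAbove, bipartiteBelow] at this
  simp_rw [hsq, this, card_filter_mem_polar_and_mem_polar hπ, sum_ite, sum_const, smul_eq_mul]
  have hdiag : #{p ∈ A ×ˢ A | p.1 = p.2} = #A := by rw [← diag_eq_filter, diag_card]
  have hsplit := card_filter_add_card_filter_not (s := A ×ˢ A) (fun p => p.1 = p.2)
  rw [card_product, hdiag] at hsplit
  rw [hdiag]
  linear_combination hsplit

theorem card_filter_adjacent_ge [DecidableEq P] (hπ : IsPolarity π) (A : Finset P) :
    (#A : ℝ) ^ 2 * (order P L + 1) / (order P L ^ 2 + order P L + 1) - #A * √(order P L) ≤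
      #{p ∈ A ×ˢ A | p.2 ∈ π p.1} := by
  set q : ℝ := (order P L : ℝ)
  set a : ℝ := (#A : ℝ)
  set d : P → ℝ := fun v => (#{x ∈ A | x ∈ π v} : ℝ)
  set c : ℝ := a * (q + 1) / (q ^ 2 + q + 1)
  have hN : 0 < q ^ 2 + q + 1 := by positivity
  have hcard : (Fintype.card P : ℝ) = q ^ 2 + q + 1 := by
    rw [card_points P L]; push_cast; rfl
  have hsum : ∑ v, d v = a * (q + 1) := by
    simp only [d, ← Nat.cast_sum, sum_card_filter_mem_polar hπ]; push_cast; rfl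
  have hsum_sq : ∑ v, d v ^ 2 = a ^ 2 + a * q := by
    simp only [d, ← Nat.cast_pow, ← Nat.cast_sum, sum_card_filter_mem_polar_sq hπ]; push_cast; rfl
  -- the variance of the degrees into `A` is at most `a q`, since `(q + 1)² ≥ q² + q + 1`
  have hvar : ∑ v, (d v - c) ^ 2 ≤ a * q := by
    have : ∑ v, (d v - c) ^ 2 = a ^ 2 + a * q - a ^ 2 * (q + 1) ^ 2 / (q ^ 2 + q + 1) := by
      simp only [sub_sq, sum_add_distrib, sum_sub_distrib, ← sum_mul, ← mul_sum, hsum, hsum_sq,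
        sum_const, card_univ, nsmul_eq_mul, hcard, c]
      field_simp
      ring
    have : a ^ 2 ≤ a ^ 2 * (q + 1) ^ 2 / (q ^ 2 + q + 1) := by
      rw [le_div_iff₀ hN]
      nlinarith [mul_nonneg (sq_nonneg a) (by positivity : (0 : ℝ) ≤ q)]
    linarith
  have hCS : (∑ v ∈ A, (d v - c)) ^ 2 ≤ (a * √q) ^ 2 := by
    calc (∑ v ∈ A, (d v - c)) ^ 2 ≤ a * ∑ v ∈ A, (d v - c) ^ 2 := sq_sum_le_card_mul_sum_sq
      _ ≤ a * (a * q) := by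
        gcongr
        exact (sum_le_sum_of_subset_of_nonneg (subset_univ A) fun _ _ _ => sq_nonneg _).trans hvar
      _ = (a * √q) ^ 2 := by rw [mul_pow, Real.sq_sqrt (by positivity)]; ring
  have hpairs : (#{p ∈ A ×ˢ A | p.2 ∈ π p.1} : ℝ) = ∑ v ∈ A, d v := by
    simp only [d, card_filter, sum_product, Nat.cast_sum]
  have := (abs_le_of_sq_le_sq' hCS (by positivity)).1
  rw [sum_sub_distrib, sum_const, nsmul_eq_mul] at this
  have hac : a * c = a ^ 2 * (q + 1) / (q ^ 2 + q + 1) := by simp only [c]; ring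
  linarith

theorem card_filter_adjacent_near_le [DecidableEq P] (hπ : IsPolarity π) (a : P) :
    #{p : P × P | p.2 ∈ π p.1 ∧ (p.1 = a ∨ p.2 = a ∨ (p.1 ∈ π a ∧ p.2 ∈ π a))} ≤
      3 * (order P L + 1) := by
  set line : Finset P := {x | x ∈ π a}
  set rest : Finset (P × P) := {p | p.1 ≠ a ∧ p.1 ∈ π a ∧ p.2 ∈ π a ∧ p.2 ∈ π p.1}
  have hline : #line = order P L + 1 := card_filter_mem (π a)
  -- `p.2` is the meet of the distinct lines `π a` and `π p.1`, so `p.1` determines `p`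
  have hrest : #rest ≤ #line := by
    refine card_le_card_of_injOn Prod.fst (fun p hp => by simp_all [line, rest]) ?_
    intro p hp p' hp' h
    obtain ⟨hne, -, hpa, hpp⟩ := (mem_filter.mp (mem_coe.mp hp)).2
    obtain ⟨-, -, hpa', hpp'⟩ := (mem_filter.mp (mem_coe.mp hp')).2
    exact Prod.ext h ((Nondegenerate.eq_or_eq hpa hpa' hpp (h ▸ hpp')).resolve_right
      fun hl => hne (π.injective hl).symm)
  have hsub : ({p | p.2 ∈ π p.1 ∧ (p.1 = a ∨ p.2 = a ∨ (p.1 ∈ π a ∧ p.2 ∈ π a))} : Finset _) ⊆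
      line.image (a, ·) ∪ line.image (·, a) ∪ rest := by
    rintro ⟨x, y⟩ hp
    simp only [mem_filter, mem_univ, true_and] at hp
    simp only [line, rest, mem_union, mem_image, mem_filter, mem_univ, true_and, Prod.mk.injEq]
    rcases hp with ⟨hxy, rfl | rfl | ⟨hx, hy⟩⟩
    · exact Or.inl (Or.inl ⟨y, hxy, rfl, rfl⟩)
    · exact Or.inl (Or.inr ⟨x, (hπ x _).mpr hxy, rfl, rfl⟩)
    · by_cases hxa : x = a
      · exact Or.inl (Or.inl ⟨y, hy, hxa.symm, rfl⟩)
      · exact Or.inr ⟨hxa, hx, hy, hxy⟩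
  calc _ ≤ #(line.image (a, ·) ∪ line.image (·, a) ∪ rest) := card_le_card hsub
    _ ≤ #line + #line + #line := by
      grw [card_union_le, card_union_le, card_image_le, card_image_le, hrest]
    _ = 3 * (order P L + 1) := by rw [hline]; ring

variable [DecidableEq P]

theorem card_filter_adjacent_le_card_separatedPairs_add (hπ : IsPolarity π) {H : Finset P}
    (hH : #H = order P L + 1) (A : Finset P) :
    #{p ∈ A ×ˢ A | p.2 ∈ π p.1} ≤ #(separatedPairs π H A) + 3 * (order P L + 1) ^ 2 := by
  set near : P → Finset (P × P) :=
    fun a => {p | p.2 ∈ π p.1 ∧ (p.1 = a ∨ p.2 = a ∨ (p.1 ∈ π a ∧ p.2 ∈ π a))}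
  have hsub : {p ∈ A ×ˢ A | p.2 ∈ π p.1} ⊆ separatedPairs π H A ∪ H.biUnion near := by
    rintro ⟨x, y⟩ hp
    obtain ⟨hxy, hadj⟩ := mem_filter.mp hp
    simp only [separatedPairs, near, mem_union, mem_filter, mem_biUnion, mem_univ, true_and]
    by_cases hx : x ∈ H
    · exact Or.inr ⟨x, hx, hadj, Or.inl rfl⟩
    by_cases hy : y ∈ H
    · exact Or.inr ⟨y, hy, hadj, Or.inr (Or.inl rfl)⟩
    by_cases hdisj : Disjoint (polarTrace π H x) (polarTrace π H y)
    · exact Or.inl ⟨hxy, hadj, hx, hy, hdisj⟩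
    obtain ⟨a, hax, hay⟩ := not_disjoint_iff.mp hdisj
    simp only [polarTrace, mem_filter] at hax hay
    exact Or.inr ⟨a, hax.1, hadj, Or.inr (Or.inr ⟨(hπ a x).mp hax.2, (hπ a y).mp hay.2⟩)⟩
  calc _ ≤ #(separatedPairs π H A) + #(H.biUnion near) :=
        (card_le_card hsub).trans (card_union_le _ _)
    _ ≤ #(separatedPairs π H A) + ∑ _a ∈ H, 3 * (order P L + 1) := by
      grw [card_biUnion_le, sum_le_sum fun a _ => card_filter_adjacent_near_le hπ a]
    _ = _ := by rw [sum_const, hH, smul_eq_mul]; ring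

theorem le_card_separatedPairs_poles (hπ : IsPolarity π) {H : Finset P} (hH : IsArc L H)
    (hHcard : #H = order P L + 1) :
    (order P L : ℝ) ^ 2 * (order P L + 1) ^ 3 / (4 * (order P L ^ 2 + order P L + 1)) -
        order P L * (order P L + 1) * √(order P L) / 2 - 3 * (order P L + 1) ^ 2 ≤
      #(separatedPairs π H (poles π H)) := by
  set q : ℝ := (order P L : ℝ)
  have hA : (#(poles π H) : ℝ) = q * (q + 1) / 2 := by
    have := two_mul_card_poles (π := π) hH subset_rfl
    rw [offDiag_card, hHcard] at this
    have := congrArg (Nat.cast (R := ℝ)) this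
    push_cast [Nat.cast_sub (Nat.le_mul_self _)] at this
    linarith
  have hmix := card_filter_adjacent_ge hπ (poles π H)
  have hsep : (#{p ∈ poles π H ×ˢ poles π H | p.2 ∈ π p.1} : ℝ) ≤
      #(separatedPairs π H (poles π H)) + 3 * (q + 1) ^ 2 := by
    have := (Nat.cast_le (α := ℝ)).mpr
      (card_filter_adjacent_le_card_separatedPairs_add hπ hHcard (poles π H))
    push_cast at this
    exact this
  rw [hA] at hmix
  have : (q * (q + 1) / 2) ^ 2 * (q + 1) / (q ^ 2 + q + 1) =
      q ^ 2 * (q + 1) ^ 3 / (4 * (q ^ 2 + q + 1)) := by field_simp; ring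
  have : q * (q + 1) / 2 * √q = q * (q + 1) * √q / 2 := by ring
  linarith

end Incidence

section Edges

variable [Fintype P] [∀ (p : P) (l : L), Decidable (p ∈ l)] [DecidableEq P] {π : P ≃ L}

def polarityEdges (π : P ≃ L) (hπ : IsPolarity π) (T : Finset P) : Finset (Sym2 P) :=
  univ.filter fun e =>
    e ∈ Sym2.fromRel (r := fun a b : P => a ∈ π b) ⟨fun a b h => (hπ a b).mp h⟩ ∧ ∀ v ∈ e, v ∈ T

theorem mk_mem_polarityEdges (hπ : IsPolarity π) {T : Finset P} {x y : P} (hxy : y ∈ π x)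
    (hx : x ∈ T) (hy : y ∈ T) : s(x, y) ∈ polarityEdges π hπ T := by
  refine mem_filter.mpr ⟨mem_univ _, Sym2.fromRel_prop.mpr ((hπ x y).mpr hxy), fun v hv => ?_⟩
  rcases Sym2.mem_iff.mp hv with rfl | rfl <;> assumption

variable [HasLines P L] {H S : Finset P}

theorem two_mul_card_offDiag_add_card_le (hπ : IsPolarity π) (hH : IsArc L H) (hS : S ⊆ H) :
    2 * #S.offDiag +
        #{p ∈ separatedPairs π H (poles π H) | polarTrace π H p.1 ∪ polarTrace π H p.2 ⊆ S} ≤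
      2 * #(polarityEdges π hπ (S ∪ poles π S)) + 4 * #S := by
  set Y := {p ∈ separatedPairs π H (poles π H) | polarTrace π H p.1 ∪ polarTrace π H p.2 ⊆ S}
  set E := Y.image fun p => s(p.1, p.2)
  have hY : #Y ≤ 2 * #E :=
    card_le_two_mul_card_of_forall_sym2_mk_mem fun p hp => mem_image_of_mem _ hp
  have hdisj : Disjoint (poleEdges π S) E := by
    refine disjoint_left.mpr fun e he he' => ?_
    obtain ⟨⟨a, b⟩, hab, rfl⟩ := mem_image.mp he
    obtain ⟨⟨x, y⟩, hxy, hxye⟩ := mem_image.mp he'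
    have haH := hS (mem_offDiag.mp (mem_filter.mp hab).1).1
    obtain ⟨-, hx, hy, -⟩ := (mem_filter.mp (mem_filter.mp hxy).1).2
    rcases Sym2.mem_iff.mp (hxye ▸ Sym2.mem_mk_right _ a : a ∈ s(x, y)) with rfl | rfl
    exacts [hx haH, hy haH]
  have hsub : poleEdges π S ∪ E ⊆ polarityEdges π hπ (S ∪ poles π S) := by
    refine union_subset (fun e he => ?_) fun e he => ?_
    · obtain ⟨⟨a, b⟩, hab, rfl⟩ := mem_image.mp he
      have hab := (mem_filter.mp hab).1
      exact mk_mem_polarityEdges hπ (mem_pole_left (mem_offDiag.mp hab).2.2)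
        (mem_union_right _ (mem_image_of_mem _ hab)) (mem_union_left _ (mem_offDiag.mp hab).1)
    · obtain ⟨⟨x, y⟩, hxy, rfl⟩ := mem_image.mp he
      obtain ⟨hxy, hS'⟩ := mem_filter.mp hxy
      obtain ⟨hxyA, hadj, -⟩ := mem_filter.mp hxy
      obtain ⟨hx, hy⟩ := mem_product.mp hxyA
      exact mk_mem_polarityEdges hπ hadj
        (mem_union_right _ (mem_poles_of_polarTrace_subset hH hx (subset_union_left.trans hS')))
        (mem_union_right _ (mem_poles_of_polarTrace_subset hH hy (subset_union_right.trans hS')))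
  have hE := card_le_card hsub
  rw [card_union_of_disjoint hdisj] at hE
  have := card_offDiag_le_card_poleEdges_add (π := π) hH hS
  omega

end Edges

section Estimates

theorem descFactorial_mul_le_mixing_bound {q : ℝ} (hq : 3 ≤ q) :
    (q + 1) * q * (q - 1) * (q - 2) * (1 / (4 * q) - 20 / (q * √q)) ≤
      q ^ 2 * (q + 1) ^ 3 / (4 * (q ^ 2 + q + 1)) - q * (q + 1) * √q / 2 - 3 * (q + 1) ^ 2 := by
  set s := √q
  have hs : s ^ 2 = q := Real.sq_sqrt (by linarith)
  have hs0 : 0 < s := Real.sqrt_pos.mpr (by linarith)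
  have hs1 : 2 * s ≤ q + 1 := by nlinarith [sq_nonneg (s - 1)]
  have hmain : (q + 1) * (q - 1) * (q - 2) / 4 ≤ q ^ 2 * (q + 1) ^ 3 / (4 * (q ^ 2 + q + 1)) := by
    rw [div_le_div_iff₀ (by norm_num) (by positivity)]
    have : (q - 1) * (q - 2) * (q ^ 2 + q + 1) ≤ q ^ 2 * (q + 1) ^ 2 := by nlinarith
    nlinarith
  have herror : q * (q + 1) * s / 2 + 3 * (q + 1) ^ 2 ≤ 20 * ((q + 1) * (q - 1) * (q - 2)) / s := by
    rw [le_div_iff₀ hs0]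
    have : q * s ^ 2 / 2 + 3 * (q + 1) * s ≤ 20 * ((q - 1) * (q - 2)) := by
      rw [hs]; nlinarith
    nlinarith
  have hlhs : (q + 1) * q * (q - 1) * (q - 2) * (1 / (4 * q) - 20 / (q * s)) =
      (q + 1) * (q - 1) * (q - 2) / 4 - 20 * ((q + 1) * (q - 1) * (q - 2)) / s := by
    field_simp
  linarith

theorem lower_bound_le_of_counts {q m e y g : ℕ} (hq : 3 ≤ q) (hm : 4 ≤ m)
    (hedges : 2 * (m * m - m) + y ≤ 2 * e + 4 * m)
    (havg : g * m.descFactorial 4 ≤ y * (q + 1).descFactorial 4)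
    (hg : ((q + 1) * q * (q - 1) * (q - 2) : ℝ) * (1 / (4 * q) - 20 / (q * √q)) ≤ g) :
    2 * (m.choose 2 : ℝ) + (m : ℝ) * ((m : ℝ) - 1) * ((m : ℝ) - 2) * ((m : ℝ) - 3) / (8 * q) -
      10 * ((m : ℝ) ^ 4 / (q : ℝ) ^ ((3 : ℝ) / 2) + m) ≤ e := by
  have hq' : (3 : ℝ) ≤ q := by exact_mod_cast hq
  have hm' : (4 : ℝ) ≤ m := by exact_mod_cast hm
  have hedges' : 2 * ((m : ℝ) * m - m) + y ≤ 2 * e + 4 * m := by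
    have := (Nat.cast_le (α := ℝ)).mpr hedges
    push_cast [Nat.cast_sub (Nat.le_mul_self m)] at this
    exact this
  have havg' : (g : ℝ) * (m * (m - 1) * (m - 2) * (m - 3)) ≤
      y * ((q + 1) * q * (q - 1) * (q - 2)) := by
    have := (Nat.cast_le (α := ℝ)).mpr havg
    push_cast [Nat.cast_descFactorial_four] at this
    rwa [show (q : ℝ) + 1 - 1 = q by ring, show (q : ℝ) + 1 - 2 = q - 1 by ring,
      show (q : ℝ) + 1 - 3 = q - 2 by ring] at this
  set s := √q
  set F : ℝ := m * (m - 1) * (m - 2) * (m - 3)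
  set D : ℝ := (q + 1) * q * (q - 1) * (q - 2)
  have hs0 : 0 < s := Real.sqrt_pos.mpr (by linarith)
  have hqs : 0 < (q : ℝ) * s := by positivity
  have hrpow : (q : ℝ) ^ ((3 : ℝ) / 2) = q * s := by
    rw [Real.rpow_div_two_eq_sqrt _ (by linarith), show (3 : ℝ) = (3 : ℕ) by norm_num,
      Real.rpow_natCast, pow_succ, Real.sq_sqrt (by linarith)]
  have hD : 0 < D := by
    have : 0 < (q : ℝ) - 2 := by linarith
    have : 0 < (q : ℝ) - 1 := by linarith
    positivity
  have hF0 : 0 ≤ F := by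
    have : 0 ≤ (m : ℝ) - 3 := by linarith
    have : 0 ≤ (m : ℝ) - 2 := by linarith
    have : 0 ≤ (m : ℝ) - 1 := by linarith
    positivity
  have hF4 : F ≤ m ^ 4 := by
    have : 0 ≤ ((m : ℝ) - 2) * (m - 3) := by nlinarith
    nlinarith
  have hy : F * (1 / (4 * q) - 20 / (q * s)) ≤ y := by
    refine le_of_mul_le_mul_left ?_ hD
    nlinarith [mul_le_mul_of_nonneg_right hg hF0]
  have hdiv : F / (q * s) ≤ m ^ 4 / (q * s) := div_le_div_of_nonneg_right hF4 hqs.le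
  have hsplit : F * (1 / (4 * q) - 20 / (q * s)) = F / (4 * q) - 20 * (F / (q * s)) := by ring
  rw [Nat.cast_choose_two, hrpow]
  have : F / (8 * q) = F / (4 * q) / 2 := by ring
  linarith

theorem lower_bound_nonpos_of_lt_four {m : ℕ} (hm : m < 4) (q : ℕ) :
    2 * (m.choose 2 : ℝ) + (m : ℝ) * ((m : ℝ) - 1) * ((m : ℝ) - 2) * ((m : ℝ) - 3) / (8 * q) -
      10 * ((m : ℝ) ^ 4 / (q : ℝ) ^ ((3 : ℝ) / 2) + m) ≤ 0 := by
  have : 0 ≤ ((q : ℝ) ^ ((3 : ℝ) / 2))⁻¹ := by positivity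
  interval_cases m <;> norm_num [div_eq_mul_inv] <;> linarith

end Estimates

end PolarityGraph

open PolarityGraph

/-- Main theorem: there is an absolute constant `C > 0` such that for every projective plane
of order `q` with a polarity `π` and an oval `H`, and every `m ∈ {1, …, q + 1}`, the polarity
graph contains a subgraph on at most `m + C(m, 2)` vertices with at least
`2 C(m, 2) + m(m-1)(m-2)(m-3)/(8q) - C (m⁴ / q^(3/2) + m)` edges. -/
theorem dense_subgraph_of_polarity_graph :
    ∃ C : ℝ, 0 < C ∧
      ∀ (P L : Type) [Membership P L] [ProjectivePlane P L] [Fintype P] [Fintype L]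
        [∀ (p : P) (l : L), Decidable (p ∈ l)] [DecidableEq P]
        (q : ℕ), ProjectivePlane.order P L = q →
      ∀ (π : P ≃ L) (hπ : ∀ p r : P, p ∈ π r ↔ r ∈ π p)
        (H : Finset P), H.card = q + 1 →
        (∀ l : L, (H.filter (· ∈ l)).card ≤ 2) →
      ∀ m : ℕ, 1 ≤ m → m ≤ q + 1 →
      ∃ T : Finset P, T.card ≤ m + m.choose 2 ∧
        ((Finset.univ.filter (fun e : Sym2 P =>
            e ∈ Sym2.fromRel (r := fun a b : P => a ∈ π b) ⟨by intro a b h; exact (hπ a b).mp h⟩ ∧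
            ∀ v ∈ e, v ∈ T)).card : ℝ) ≥
          2 * (m.choose 2 : ℝ) +
            (m : ℝ) * ((m : ℝ) - 1) * ((m : ℝ) - 2) * ((m : ℝ) - 3) / (8 * q) -
            C * ((m : ℝ) ^ 4 / (q : ℝ) ^ ((3 : ℝ) / 2) + m) := by
  refine ⟨10, by norm_num, ?_⟩
  intro P L _ _ _ _ _ _ q hq π hπ H hHcard hH m _ hmq
  subst hq
  rcases lt_or_ge m 4 with hm | hm
  · exact ⟨∅, by simp, (lower_bound_nonpos_of_lt_four hm _).trans (Nat.cast_nonneg _)⟩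
  obtain ⟨S, hS, hY⟩ := exists_mem_powersetCard_mul_descFactorial_le H
    (separatedPairs π H (poles π H)) _ (fun p hp => polarTrace_union_subset_and_card hH hp) hm
    (hHcard ▸ hmq)
  obtain ⟨hSH, rfl⟩ := mem_powersetCard.mp hS
  refine ⟨S ∪ poles π S, (card_union_le _ _).trans (by rw [card_poles hH hSH]), ?_⟩
  have hedges := two_mul_card_offDiag_add_card_le hπ hH hSH
  rw [offDiag_card] at hedges
  rw [hHcard] at hY
  have hq : 3 ≤ ProjectivePlane.order P L := by omega
  have hG := (descFactorial_mul_le_mixing_bound (by exact_mod_cast hq)).trans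
    (le_card_separatedPairs_poles hπ hH hHcard)
  exact lower_bound_le_of_counts hq hm hedges hY hG
end

section
/- For every prime power q ≥ 2, ex(q² - q - 2, C₄) ≥ (1/2)q³ - q² + (3/2)q - C·q^{1/2} for some absolute constant C. In particular, for large q this exceeds (1/2)q³ - q², disproving the conjecture of Abreu, Balbuena, and Labbate that ex(q²-q-2, C₄) = (1/2)q³ - q² for q a power of 2. -/
/-!
Identify the points off a line of `PG(2, q)` with `F × F`; the Erdős–Rényi polarity graph then
induces the graph `(x, y) ~ (x', y') ↔ y + y' = x x'` on them. It is `C₄`-free, and every vertex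
has degree `q`, or `q - 1` if it lies on its own polar line, which happens for at most `q`
vertices; so it has at least `(q³ - q) / 2` edges. Deleting a set `T` of `q + 2` vertices costs at
most `q (q + 2)` edges minus those inside `T`, so it suffices to find `T` spanning `4q - O(1)` edges.
Take `T ⊇ X × Y` with `|X| ≥ 9` and `X X - J ⊆ Y` for a large `J ⊆ Y`: each `(x, y)` with `y ∈ J`
is then joined to `(x', x x' - y) ∈ T` for every other `x' ∈ X`. For `q = p` take `X = {1, …, 9}`
and `J ⊆ Y` two centred intervals of length about `q / 9`; for `q = p^k` with `k ≥ 2` take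
`X` and `J = Y` spans of the first few powers of a primitive element. The finitely many
`q ≤ 4096` are absorbed by the constant.
-/

open Finset

theorem Finset.exists_embedding_fin_map_univ_eq {α : Type*} (s : Finset α) {n : ℕ}
    (h : #s = n) : ∃ f : Fin n ↪ α, univ.map f = s := by
  subst h
  refine ⟨s.equivFin.symm.toEmbedding.trans (Function.Embedding.subtype _), ?_⟩
  rw [← map_map, map_univ_equiv, univ_eq_attach, attach_map_val]

theorem ZMod.intCast_injOn_Icc {n : ℕ} {a b : ℤ} (h : b - a < n) :
    Set.InjOn (Int.cast : ℤ → ZMod n) (Set.Icc a b) := by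
  intro x hx y hy hxy
  rw [ZMod.intCast_eq_intCast_iff_dvd_sub] at hxy
  have := Int.eq_zero_of_abs_lt_dvd hxy
    (abs_lt.2 ⟨by linarith [hx.2, hy.1], by linarith [hx.1, hy.2]⟩)
  omega

theorem ZMod.card_image_intCast_Icc {n : ℕ} {a b : ℤ} (h : b - a < n) :
    #((Icc a b).image (Int.cast : ℤ → ZMod n)) = (b + 1 - a).toNat := by
  rw [card_image_of_injOn (by simpa using ZMod.intCast_injOn_Icc h), Int.card_Icc]

namespace PowerBasis

variable {K F : Type*} [Field K]

theorem linearIndependent_pow_of_le [Ring F] [Algebra K F] (pb : PowerBasis K F) {m : ℕ}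
    (hm : m ≤ pb.dim) : LinearIndependent K (fun i : Fin m => pb.gen ^ (i : ℕ)) :=
  (linearIndependent_pow pb.gen).comp (Fin.castLE (pb.natDegree_minpoly ▸ hm))
    (Fin.castLE_injective _)

theorem natCard_span_pow [Finite K] [Ring F] [Algebra K F] (pb : PowerBasis K F) {m : ℕ}
    (hm : m ≤ pb.dim) :
    Nat.card (Submodule.span K (Set.range fun i : Fin m => pb.gen ^ (i : ℕ))) =
      Nat.card K ^ m := by
  have := Module.Finite.span_of_finite K (Set.finite_range fun i : Fin m => pb.gen ^ (i : ℕ))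
  rw [Module.natCard_eq_pow_finrank (K := K),
    finrank_span_eq_card (pb.linearIndependent_pow_of_le hm), Fintype.card_fin]

theorem span_pow_mul_span_pow_le [CommRing F] [Algebra K F] (γ : F) {a b : ℕ}
    (h : 2 * a ≤ b + 1) :
    Submodule.span K (Set.range fun i : Fin a => γ ^ (i : ℕ)) *
      Submodule.span K (Set.range fun i : Fin a => γ ^ (i : ℕ)) ≤
      Submodule.span K (Set.range fun i : Fin b => γ ^ (i : ℕ)) := by
  rw [Submodule.span_mul_span, Submodule.span_le]
  rintro _ ⟨_, ⟨i, rfl⟩, _, ⟨j, rfl⟩, rfl⟩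
  exact Submodule.subset_span ⟨⟨i + j, by omega⟩, by simp [pow_add]⟩

end PowerBasis

namespace SimpleGraph

variable {V W : Type*}

def FourCycleFree (G : SimpleGraph V) : Prop :=
  ∀ a b c d, G.Adj a b → G.Adj b c → G.Adj c d → G.Adj d a → a = c ∨ b = d

theorem FourCycleFree.comap {G : SimpleGraph V} (hG : G.FourCycleFree) {f : W → V}
    (hf : Function.Injective f) : (G.comap f).FourCycleFree :=
  fun _ _ _ _ hab hbc hcd hda => (hG _ _ _ _ hab hbc hcd hda).imp (@hf _ _) (@hf _ _)

variable (G : SimpleGraph V) [DecidableRel G.Adj]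

theorem card_interedges_eq_sum (s t : Finset V) :
    #(G.interedges s t) = ∑ v ∈ s, #{w ∈ t | G.Adj v w} := by
  simp only [interedges, Rel.interedges, card_filter, sum_product]

theorem two_mul_card_edgeFinset_comap [Fintype W] (f : W ↪ V) [DecidableRel (G.comap f).Adj] :
    2 * #(G.comap f).edgeFinset = #(G.interedges (univ.map f) (univ.map f)) := by
  rw [two_mul_card_edgeFinset, ← card_map (f.prodMap f)]
  congr 1
  ext ⟨a, b⟩
  simp only [mem_map, mem_filter, mem_univ, true_and, Prod.exists, Function.Embedding.coe_prodMap,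
    Prod.map_apply, Prod.mk.injEq, mem_interedges_iff, comap_adj]
  constructor
  · rintro ⟨x, y, h, rfl, rfl⟩
    exact ⟨⟨x, rfl⟩, ⟨y, rfl⟩, h⟩
  · rintro ⟨⟨x, rfl⟩, ⟨y, rfl⟩, h⟩
    exact ⟨x, y, h, rfl, rfl⟩

variable [Fintype V]

theorem card_interedges_univ_eq_sum_degree : #(G.interedges univ univ) = ∑ v, G.degree v := by
  simp only [card_interedges_eq_sum, ← card_neighborFinset_eq_degree, neighborFinset_eq_filter]

theorem card_interedges_le_card_mul {Δ : ℕ} (hΔ : ∀ v, G.degree v ≤ Δ) (s t : Finset V) :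
    #(G.interedges s t) ≤ #s * Δ := by
  rw [card_interedges_eq_sum, ← smul_eq_mul, ← sum_const]
  refine sum_le_sum fun v _ => le_trans ?_ (hΔ v)
  rw [← card_neighborFinset_eq_degree, neighborFinset_eq_filter]
  exact card_le_card (filter_subset_filter _ (subset_univ t))

variable [DecidableEq V]

theorem card_interedges_add_card_interedges_eq (s : Finset V) :
    #(G.interedges univ univ) + #(G.interedges s s) =
      #(G.interedges sᶜ sᶜ) + #(G.interedges s univ) + #(G.interedges univ s) := by
  have h (s t : Finset V) :
      #(G.interedges s t) = #{e : V × V | e.1 ∈ s ∧ e.2 ∈ t ∧ G.Adj e.1 e.2} :=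
    congrArg card (by ext; simp [mem_interedges_iff])
  simp only [h, card_filter, ← sum_add_distrib]
  refine sum_congr rfl fun e _ => ?_
  by_cases h : G.Adj e.1 e.2 <;> by_cases h1 : e.1 ∈ s <;> by_cases h2 : e.2 ∈ s <;>
    simp [h, h1, h2]

theorem card_interedges_add_le {Δ : ℕ} (hΔ : ∀ v, G.degree v ≤ Δ) (s : Finset V) :
    #(G.interedges univ univ) + #(G.interedges s s) ≤
      #(G.interedges sᶜ sᶜ) + 2 * (#s * Δ) := by
  have hcomm : #(G.interedges univ s) = #(G.interedges s univ) :=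
    @Rel.card_interedges_comm _ _ _ G.symm _ _
  have := G.card_interedges_le_card_mul hΔ s univ
  have := G.card_interedges_add_card_interedges_eq s
  omega

end SimpleGraph

open SimpleGraph

/-- The Erdős–Rényi polarity graph of the form `x x' - y z' - z y'`, restricted to the points
`(x : y : 1)` off the line `z = 0`: the point `(x, y)` is joined to the other points of its polar
line `y + y' = x x'`. -/
def affinePolarityGraph (R : Type*) [CommRing R] : SimpleGraph (R × R) where
  Adj v w := v ≠ w ∧ v.2 + w.2 = v.1 * w.1
  symm := ⟨fun _ _ h => ⟨h.1.symm, by rw [add_comm, mul_comm]; exact h.2⟩⟩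
  loopless := ⟨fun _ h => h.1 rfl⟩

namespace affinePolarityGraph

section CommRing

variable {R : Type*} [CommRing R]

instance [DecidableEq R] : DecidableRel (affinePolarityGraph R).Adj :=
  fun _ _ => inferInstanceAs (Decidable (_ ∧ _))

theorem adj_iff {v w : R × R} :
    (affinePolarityGraph R).Adj v w ↔ v ≠ w ∧ v.2 + w.2 = v.1 * w.1 := Iff.rfl

theorem fourCycleFree [NoZeroDivisors R] : (affinePolarityGraph R).FourCycleFree := by
  rintro a b c d ⟨-, hab⟩ ⟨-, hbc⟩ ⟨-, hcd⟩ ⟨-, hda⟩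
  have key : (b.1 - d.1) * (a.1 - c.1) = 0 := by linear_combination hbc - hab + hda - hcd
  rcases mul_eq_zero.1 key with h | h
  · exact Or.inr (Prod.ext (sub_eq_zero.1 h) (by linear_combination hab - hda + a.1 * h))
  · exact Or.inl (Prod.ext (sub_eq_zero.1 h) (by linear_combination hab - hbc + b.1 * h))

variable [DecidableEq R]

theorem card_offDiag_mul_card_le_card_interedges {X Y J : Finset R} (hJ : J ⊆ Y)
    (h : ∀ x ∈ X, ∀ x' ∈ X, ∀ y ∈ J, x * x' - y ∈ Y) :
    #X.offDiag * #J ≤ #((affinePolarityGraph R).interedges (X ×ˢ Y) (X ×ˢ Y)) := by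
  rw [← card_product]
  refine card_le_card_of_injOn (fun z => ((z.1.1, z.2), (z.1.2, z.1.1 * z.1.2 - z.2))) ?_ ?_
  · rintro ⟨⟨x, x'⟩, y⟩ hz
    simp only [coe_product, Set.mem_prod, mem_coe, mem_offDiag] at hz
    obtain ⟨⟨hx, hx', hne⟩, hy⟩ := hz
    rw [mem_coe, mem_interedges_iff]
    exact ⟨mk_mem_product hx (hJ hy), mk_mem_product hx' (h x hx x' hx' y hy),
      fun heq => hne (congrArg Prod.fst heq), by ring⟩
  · rintro ⟨⟨x, x'⟩, y⟩ - ⟨⟨u, u'⟩, w⟩ - heq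
    simp only [Prod.mk.injEq] at heq
    obtain ⟨⟨rfl, rfl⟩, rfl, -⟩ := heq
    rfl

/-- `S = {1, …, 9} × [-r, r]`: for `y ∈ [81 - r, r - 1]` and `x, x' ≤ 9`, `x x' - y` stays in
`[-r, r]`. -/
theorem exists_dense_finset_zmod (n : ℕ) (hn : 9 < n) :
    ∃ S : Finset (ZMod n × ZMod n), #S ≤ n + 2 ∧
      8 * n ≤ #((affinePolarityGraph (ZMod n)).interedges S S) + 6100 := by
  set r : ℤ := (n - 7) / 18 with hr
  set X := (Icc (1 : ℤ) 9).image (Int.cast : ℤ → ZMod n)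
  set Y := (Icc (-r) r).image (Int.cast : ℤ → ZMod n)
  set J := (Icc (81 - r) (r - 1)).image (Int.cast : ℤ → ZMod n)
  have hX : #X = 9 := ZMod.card_image_intCast_Icc (by omega)
  have hY : #Y ≤ (2 * r + 1).toNat := card_image_le.trans (by rw [Int.card_Icc]; omega)
  have hJ : #J = (2 * r - 81).toNat := by rw [ZMod.card_image_intCast_Icc (by omega)]; omega
  have hJY : J ⊆ Y := image_subset_image (Icc_subset_Icc (by omega) (by omega))
  have hXJ : ∀ x ∈ X, ∀ x' ∈ X, ∀ y ∈ J, x * x' - y ∈ Y := by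
    simp only [X, J, Y, mem_image, mem_Icc]
    rintro _ ⟨i, hi, rfl⟩ _ ⟨j, hj, rfl⟩ _ ⟨m, hm, rfl⟩
    exact ⟨i * j - m, ⟨by nlinarith, by nlinarith⟩, by push_cast; ring⟩
  refine ⟨X ×ˢ Y, ?_, ?_⟩
  · rw [card_product, hX]
    omega
  · have := card_offDiag_mul_card_le_card_interedges hJY hXJ
    rw [offDiag_card, hX, hJ] at this
    omega

variable [Fintype R]

def polar (v : R × R) : Finset (R × R) := univ.image fun x => (x, v.1 * x - v.2)

theorem mem_polar {v w : R × R} : w ∈ polar v ↔ v.2 + w.2 = v.1 * w.1 := by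
  simp only [polar, mem_image, mem_univ, true_and]
  constructor
  · rintro ⟨x, rfl⟩
    ring
  · intro h
    exact ⟨w.1, Prod.ext rfl (by linear_combination -h)⟩

theorem card_polar (v : R × R) : #(polar v) = Fintype.card R :=
  card_image_of_injective _ fun _ _ h => congrArg Prod.fst h

theorem neighborFinset_eq (v : R × R) :
    (affinePolarityGraph R).neighborFinset v = (polar v).erase v := by
  ext w
  simp only [mem_neighborFinset, adj_iff, mem_erase, mem_polar, ne_comm]

theorem degree_le (v : R × R) : (affinePolarityGraph R).degree v ≤ Fintype.card R := by
  rw [← card_neighborFinset_eq_degree, neighborFinset_eq, ← card_polar v]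
  exact card_erase_le

theorem card_le_degree_add (v : R × R) :
    Fintype.card R ≤
      (affinePolarityGraph R).degree v + if v.2 + v.2 = v.1 * v.1 then 1 else 0 := by
  rw [← card_neighborFinset_eq_degree, neighborFinset_eq, ← card_polar v]
  split_ifs with h
  · have := pred_card_le_card_erase (s := polar v) (a := v)
    omega
  · rw [erase_eq_of_notMem (mt mem_polar.1 h)]
    omega

end CommRing

section Field

variable {F : Type*} [Field F] [Fintype F] [DecidableEq F]

theorem card_absolute_le : #{v : F × F | v.2 + v.2 = v.1 * v.1} ≤ Fintype.card F := by
  by_cases h2 : (2 : F) = 0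
  · refine card_le_card_of_injOn Prod.snd (fun _ _ => mem_coe.2 (mem_univ _)) ?_
    rintro v hv w hw hvw
    simp only [coe_filter, mem_univ, true_and, Set.mem_ofPred_eq] at hv hw
    have hx (u : F × F) (hu : u.2 + u.2 = u.1 * u.1) : u.1 = 0 :=
      mul_self_eq_zero.1 (by linear_combination -hu + u.2 * h2)
    exact Prod.ext ((hx v hv).trans (hx w hw).symm) hvw
  · refine card_le_card_of_injOn Prod.fst (fun _ _ => mem_coe.2 (mem_univ _)) ?_
    rintro v hv w hw hvw
    simp only [coe_filter, mem_univ, true_and, Set.mem_ofPred_eq] at hv hw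
    refine Prod.ext hvw (mul_left_cancel₀ h2 ?_)
    linear_combination hv - hw + (v.1 + w.1) * hvw

theorem card_pow_three_le :
    Fintype.card F ^ 3 ≤ #((affinePolarityGraph F).interedges univ univ) + Fintype.card F := by
  rw [card_interedges_univ_eq_sum_degree]
  calc Fintype.card F ^ 3 = ∑ _v : F × F, Fintype.card F := by
        rw [sum_const, card_univ, Fintype.card_prod, smul_eq_mul]; ring
    _ ≤ ∑ v : F × F,
          ((affinePolarityGraph F).degree v + if v.2 + v.2 = v.1 * v.1 then 1 else 0) :=
        sum_le_sum fun v _ => card_le_degree_add v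
    _ ≤ _ := by
        rw [sum_add_distrib, ← card_filter]
        exact Nat.add_le_add_left card_absolute_le _

/-- `S = W × Z` for the spans `W`, `Z` of the first `a` and the first `d - a` powers of a
primitive element, `d = [F : K]`; then `W W ⊆ Z` as `2 (a - 1) < d - a`. -/
theorem exists_dense_finset_of_three_mul_le (K : Type*) [Field K] [Fintype K] [Algebra K F]
    {a : ℕ} (ha : 3 * a ≤ Module.finrank K F + 1) :
    ∃ S : Finset (F × F), #S = Fintype.card F ∧
      (Fintype.card K ^ a - 1) * Fintype.card F ≤
        #((affinePolarityGraph F).interedges S S) := by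
  classical
  let pb := Field.powerBasisOfFiniteOfSeparable K F
  let span_pow (m : ℕ) : Finset F :=
    {x | x ∈ Submodule.span K (Set.range fun i : Fin m => pb.gen ^ (i : ℕ))}
  have hcard {m : ℕ} (hm : m ≤ pb.dim) : #(span_pow m) = Fintype.card K ^ m := by
    rw [← Nat.card_eq_finsetCard, Fintype.card_eq_nat_card, ← pb.natCard_span_pow hm]
    exact Nat.card_congr (Equiv.subtypeEquivRight fun _ => by simp [span_pow])
  rw [pb.finrank] at ha
  have hF : Fintype.card F = Fintype.card K ^ a * Fintype.card K ^ (pb.dim - a) := by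
    rw [← pow_add, Nat.add_sub_cancel' (by omega), Module.card_eq_pow_finrank (K := K),
      pb.finrank]
  have hmul : ∀ x ∈ span_pow a, ∀ x' ∈ span_pow a, ∀ y ∈ span_pow (pb.dim - a),
      x * x' - y ∈ span_pow (pb.dim - a) := by
    simp only [span_pow, mem_filter, mem_univ, true_and]
    exact fun x hx x' hx' y hy => sub_mem
      (PowerBasis.span_pow_mul_span_pow_le _ (by omega) (Submodule.mul_mem_mul hx hx')) hy
  refine ⟨span_pow a ×ˢ span_pow (pb.dim - a), ?_, ?_⟩
  · rw [card_product, hcard (by omega), hcard (by omega), hF]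
  · have := card_offDiag_mul_card_le_card_interedges subset_rfl hmul
    rw [offDiag_card, hcard (by omega), hcard (by omega)] at this
    rwa [hF, Nat.sub_one_mul, ← mul_assoc, ← Nat.sub_mul]

theorem exists_fourCycleFree_of_card_le {q : ℕ} (hq : Fintype.card F = q) (S : Finset (F × F))
    (hS : #S ≤ q + 2) :
    ∃ (G : SimpleGraph (Fin (q ^ 2 - q - 2))) (_ : DecidableRel G.Adj), G.FourCycleFree ∧
      q ^ 3 + #((affinePolarityGraph F).interedges S S) ≤
        2 * #G.edgeFinset + 2 * q * (q + 2) + q := by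
  subst hq
  have hq2 : 2 ≤ Fintype.card F := Fintype.one_lt_card
  obtain ⟨T, hST, hT⟩ := exists_superset_card_eq hS (by rw [Fintype.card_prod]; nlinarith)
  obtain ⟨f, hf⟩ := Tᶜ.exists_embedding_fin_map_univ_eq
    (n := Fintype.card F ^ 2 - Fintype.card F - 2)
    (by rw [card_compl, Fintype.card_prod, hT, sq]; omega)
  refine ⟨(affinePolarityGraph F).comap f, inferInstance, fourCycleFree.comap f.injective, ?_⟩
  have hE := two_mul_card_edgeFinset_comap (affinePolarityGraph F) f
  rw [hf] at hE
  have hdel := card_interedges_add_le _ degree_le T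
  have hST' := card_le_card (interedges_mono (G := affinePolarityGraph F) hST hST)
  have := card_pow_three_le (F := F)
  rw [hT] at hdel
  nlinarith

end Field

end affinePolarityGraph

open affinePolarityGraph

theorem nine_le_pow_succ_div_three {p k : ℕ} (hk : 2 ≤ k) (h : 4096 < p ^ k) :
    9 ≤ p ^ ((k + 1) / 3) := by
  by_contra! hlt
  have hp0 : 0 < p := Nat.pos_of_ne_zero (by rintro rfl; simp [zero_pow (by omega : k ≠ 0)] at h)
  have hp : p ≤ 8 := (Nat.le_self_pow (n := (k + 1) / 3) (by omega) p).trans (by omega)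
  have : p ^ k ≤ 4096 :=
    calc p ^ k ≤ p ^ (3 * ((k + 1) / 3) + 1) := Nat.pow_le_pow_right hp0 (by omega)
      _ = (p ^ ((k + 1) / 3)) ^ 3 * p := by ring
      _ ≤ 8 ^ 3 * 8 := Nat.mul_le_mul (Nat.pow_le_pow_left (by omega) 3) hp
  omega

theorem exists_dense_finset_of_prime_pow {p k : ℕ} (hp : p.Prime) (hk : 1 ≤ k)
    (hq : 4096 < p ^ k) :
    ∃ (F : Type) (_ : Field F) (_ : Fintype F) (_ : DecidableEq F), Fintype.card F = p ^ k ∧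
      ∃ S : Finset (F × F), #S ≤ p ^ k + 2 ∧
        8 * p ^ k ≤ #((affinePolarityGraph F).interedges S S) + 6100 := by
  have := Fact.mk hp
  rcases hk.eq_or_lt with rfl | hk
  · rw [pow_one] at hq ⊢
    exact ⟨ZMod p, inferInstance, inferInstance, inferInstance, ZMod.card p,
      exists_dense_finset_zmod p (by omega)⟩
  · have := Fintype.ofFinite (GaloisField p k)
    have := Classical.decEq (GaloisField p k)
    have hcard : Fintype.card (GaloisField p k) = p ^ k := by
      rw [Fintype.card_eq_nat_card, GaloisField.card p k (by omega)]
    obtain ⟨S, hS, hdense⟩ := exists_dense_finset_of_three_mul_le (ZMod p)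
      (F := GaloisField p k) (a := (k + 1) / 3)
      (by rw [GaloisField.finrank p (by omega)]; omega)
    refine ⟨GaloisField p k, inferInstance, inferInstance, inferInstance, hcard, S,
      by omega, ?_⟩
    rw [ZMod.card, hcard] at hdense
    have := Nat.mul_le_mul_right (p ^ k)
      (Nat.le_sub_one_of_lt (nine_le_pow_succ_div_three hk hq))
    omega

theorem exists_large_fourCycleFree {p k : ℕ} (hp : p.Prime) (hk : 1 ≤ k) (hq : 4096 < p ^ k) :
    ∃ (G : SimpleGraph (Fin ((p ^ k) ^ 2 - p ^ k - 2))) (_ : DecidableRel G.Adj),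
      G.FourCycleFree ∧
        (p ^ k) ^ 3 + 3 * p ^ k ≤ 2 * #G.edgeFinset + 2 * (p ^ k) ^ 2 + 6100 := by
  obtain ⟨F, _, _, _, hF, S, hS, hdense⟩ := exists_dense_finset_of_prime_pow hp hk hq
  obtain ⟨G, hG, hC4, hE⟩ := exists_fourCycleFree_of_card_le hF S hS
  exact ⟨G, hG, hC4, by nlinarith⟩

/-- There is an absolute constant `C > 0` such that for every prime power `q ≥ 2` there is a
`C₄`-free graph on `q² - q - 2` vertices with at least `(1/2)q³ - q² + (3/2)q - C q^(1/2)`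
edges, i.e. `ex(q² - q - 2, C₄) ≥ (1/2)q³ - q² + (3/2)q - O(q^(1/2))`.  Moreover for all
sufficiently large `q` this bound exceeds `(1/2)q³ - q²`, disproving the conjecture of Abreu,
Balbuena, and Labbate that `ex(q² - q - 2, C₄) = (1/2)q³ - q²` for `q` a power of `2`. -/
theorem ex_C4_lower_bound_ABL :
    ∃ C : ℝ, 0 < C ∧
      (∀ q : ℕ, 2 ≤ q → (∃ (p k : ℕ), p.Prime ∧ 1 ≤ k ∧ q = p ^ k) →
        ∃ (G : SimpleGraph (Fin (q ^ 2 - q - 2))) (_ : DecidableRel G.Adj),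
          (∀ a b c d, G.Adj a b → G.Adj b c → G.Adj c d → G.Adj d a → a = c ∨ b = d) ∧
          (G.edgeFinset.card : ℝ) ≥
            (1 / 2) * (q : ℝ) ^ 3 - (q : ℝ) ^ 2 + (3 / 2) * q - C * Real.sqrt q) ∧
      ∃ Q : ℕ, ∀ q : ℕ, Q ≤ q →
        (1 / 2) * (q : ℝ) ^ 3 - (q : ℝ) ^ 2 + (3 / 2) * q - C * Real.sqrt q >
          (1 / 2) * (q : ℝ) ^ 3 - (q : ℝ) ^ 2 := by
  refine ⟨10 ^ 12, by norm_num, fun q hq2 ⟨p, k, hp, hk, hpk⟩ => ?_, 10 ^ 24, fun q hq => ?_⟩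
  · have hsqrt : 1 ≤ √(q : ℝ) := Real.one_le_sqrt.2 (by exact_mod_cast (by omega : 1 ≤ q))
    by_cases hsmall : q ≤ 4096
    · refine ⟨⊥, inferInstance, fun _ _ _ _ h => h.elim, le_trans ?_ (Nat.cast_nonneg _)⟩
      have : (q : ℝ) ^ 3 ≤ 4096 ^ 3 := by gcongr; exact_mod_cast hsmall
      nlinarith
    · subst hpk
      obtain ⟨G, hG, hC4, hE⟩ := exists_large_fourCycleFree hp hk (by omega)
      refine ⟨G, hG, hC4, ?_⟩
      have : ((p ^ k : ℕ) : ℝ) ^ 3 + 3 * (p ^ k : ℕ) ≤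
          2 * (#G.edgeFinset : ℝ) + 2 * ((p ^ k : ℕ) : ℝ) ^ 2 + 6100 := by exact_mod_cast hE
      nlinarith
  · have hsqrt : (10 : ℝ) ^ 12 ≤ √(q : ℝ) :=
      Real.le_sqrt_of_sq_le (by norm_num; exact_mod_cast hq)
    have hq : (q : ℝ) = √(q : ℝ) * √(q : ℝ) := (Real.mul_self_sqrt (Nat.cast_nonneg q)).symm
    nlinarith
end
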